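/- arXiv:1708.05455 — 7 statements merged into one kernel-verified Lean document; each statement's English description precedes it below -/
import Mathlib

section
/- A dominating broadcast f on a graph G is a minimal dominating broadcast if and only if for every vertex v with f(v) > 0, the f-private boundary PB_f(v) is nonempty. -/
namespace AJC

variable {V : Type*}

/-- Eccentricity of a vertex: max distance to any vertex. -/
noncomputable def ecc [Fintype V] (G : SimpleGraph V) (v : V) : ℕ :=
  Finset.univ.sup (fun u => G.dist v u)

/-- Diameter: max eccentricity. -/
noncomputable def diam [Fintype V] (G : SimpleGraph V) : ℕ :=
  Finset.univ.sup (fun v => ecc G v)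

/-- Radius: minimum eccentricity. -/
noncomputable def rad [Fintype V] (G : SimpleGraph V) : ℕ :=
  sInf (Set.range (ecc G))

/-- A broadcast on `G`. -/
def IsBroadcast [Fintype V] (G : SimpleGraph V) (f : V → ℕ) : Prop :=
  ∀ v, f v ≤ ecc G v

/-- `u` hears the broadcast `f` (is dominated by `f`). -/
def Hears (G : SimpleGraph V) (f : V → ℕ) (u : V) : Prop :=
  ∃ v, 1 ≤ f v ∧ G.dist v u ≤ f v

/-- A dominating broadcast. -/
def IsDomBroadcast [Fintype V] (G : SimpleGraph V) (f : V → ℕ) : Prop :=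
  IsBroadcast G f ∧ ∀ u, Hears G f u

/-- A minimal dominating broadcast: no strictly smaller broadcast is dominating. -/
def IsMinDomBroadcast [Fintype V] (G : SimpleGraph V) (f : V → ℕ) : Prop :=
  IsDomBroadcast G f ∧ ∀ f' : V → ℕ, f' < f → ¬ IsDomBroadcast G f'

/-- The cost of a broadcast. -/
def cost [Fintype V] (f : V → ℕ) : ℕ := ∑ v, f v

/-- The upper broadcast domination number `Γ_b`. -/
noncomputable def upperBroadcastNum [Fintype V] (G : SimpleGraph V) : ℕ :=
  sSup {n | ∃ f : V → ℕ, IsMinDomBroadcast G f ∧ cost f = n}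

/-- The broadcast domination number `γ_b`. -/
noncomputable def broadcastNum [Fintype V] (G : SimpleGraph V) : ℕ :=
  sInf {n | ∃ f : V → ℕ, IsDomBroadcast G f ∧ cost f = n}

/-- The `f`-neighbourhood of `v`. -/
def Nf (G : SimpleGraph V) (f : V → ℕ) (v : V) : Set V := {u | G.dist v u ≤ f v}

/-- The `f`-boundary of `v`. -/
def Bf (G : SimpleGraph V) (f : V → ℕ) (v : V) : Set V := {u | G.dist v u = f v}

/-- The `f`-private neighbourhood of `v`. -/
def PN (G : SimpleGraph V) (f : V → ℕ) (v : V) : Set V :=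
  {u | G.dist v u ≤ f v ∧ ∀ w, w ≠ v → 1 ≤ f w → ¬ G.dist w u ≤ f w}

/-- The `f`-private boundary of `v`: vertices in `N_f[v]` not dominated once the
broadcast at `v` is decreased by one. -/
def PB [DecidableEq V] (G : SimpleGraph V) (f : V → ℕ) (v : V) : Set V :=
  {u | G.dist v u ≤ f v ∧ ¬ Hears G (Function.update f v (f v - 1)) u}

/-- A dominating set of vertices. -/
def IsDomSet (G : SimpleGraph V) (S : Finset V) : Prop :=
  ∀ v, v ∈ S ∨ ∃ u ∈ S, G.Adj u v

/-- A minimal dominating set. -/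
def IsMinDomSet (G : SimpleGraph V) (S : Finset V) : Prop :=
  IsDomSet G S ∧ ∀ T ⊂ S, ¬ IsDomSet G T

/-- An independent set of vertices. -/
def IsIndepSet (G : SimpleGraph V) (S : Finset V) : Prop :=
  ∀ u ∈ S, ∀ w ∈ S, u ≠ w → ¬ G.Adj u w

/-- The upper domination number `Γ`. -/
noncomputable def upperDomNum [Fintype V] (G : SimpleGraph V) : ℕ :=
  sSup {n | ∃ S : Finset V, IsMinDomSet G S ∧ S.card = n}

/-- The domination number `γ`. -/
noncomputable def domNum [Fintype V] (G : SimpleGraph V) : ℕ :=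
  sInf {n | ∃ S : Finset V, IsDomSet G S ∧ S.card = n}

/-- The independence number `α`. -/
noncomputable def indepNum [Fintype V] (G : SimpleGraph V) : ℕ :=
  sSup {n | ∃ S : Finset V, IsIndepSet G S ∧ S.card = n}

/-- Given a diametrical path `v 0, …, v d` of a tree, `sideTree G d v i` is the set of
vertices connected to `v i` by a path internally disjoint from the diametrical path. -/
def sideTree (G : SimpleGraph V) (d : ℕ) (v : ℕ → V) (i : ℕ) : Set V :=
  {x | ∃ p : G.Walk x (v i), p.IsPath ∧ ∀ y ∈ p.support, y ≠ v i → ∀ j ≤ d, v j ≠ y}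

/-- The diameter of the subtree `T_i`. -/
noncomputable def sideDiam (G : SimpleGraph V) (d : ℕ) (v : ℕ → V) (i : ℕ) : ℕ :=
  sSup {n | ∃ x ∈ sideTree G d v i, ∃ y ∈ sideTree G d v i, G.dist x y = n}

/-- The eccentricity of a vertex `x` within the subtree `T_i`. -/
noncomputable def sideEcc (G : SimpleGraph V) (d : ℕ) (v : ℕ → V) (i : ℕ) (x : V) : ℕ :=
  sSup {n | ∃ y ∈ sideTree G d v i, G.dist x y = n}

/-- A leaf of `G`. -/
def IsLeaf [Fintype V] (G : SimpleGraph V) [DecidableRel G.Adj] (x : V) : Prop :=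
  G.degree x = 1

/-- A stem: a vertex adjacent to a leaf. -/
def IsStem [Fintype V] (G : SimpleGraph V) [DecidableRel G.Adj] (x : V) : Prop :=
  ∃ l, IsLeaf G l ∧ G.Adj x l

/-- A strong stem: a vertex adjacent to at least two leaves. -/
def IsStrongStem [Fintype V] (G : SimpleGraph V) [DecidableRel G.Adj] (x : V) : Prop :=
  ∃ l₁ l₂, l₁ ≠ l₂ ∧ IsLeaf G l₁ ∧ IsLeaf G l₂ ∧ G.Adj x l₁ ∧ G.Adj x l₂


/-- A dominating broadcast is minimal dominating iff every broadcast vertex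
has a nonempty private boundary. -/
theorem stmt1 {V : Type*} [Fintype V] [DecidableEq V] (G : SimpleGraph V)
    (hconn : G.Connected) (f : V → ℕ) (hf : IsDomBroadcast G f) :
    IsMinDomBroadcast G f ↔ ∀ v, 0 < f v → (PB G f v).Nonempty := by
  constructor
  · rintro ⟨_, hmin⟩ v hv
    by_contra hempty
    rw [Set.not_nonempty_iff_eq_empty] at hempty
    set f' := Function.update f v (f v - 1) with hf'
    have hlt : f' < f := by
      rw [Pi.lt_def]
      constructor
      · intro i
        by_cases hi : i = v
        · subst hi; simp [hf']
        · simp [hf', Function.update_of_ne hi]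
      · exact ⟨v, by simp [hf', Nat.sub_lt hv one_pos]⟩
    refine hmin f' hlt ⟨fun w => le_trans (hlt.le w) (hf.1 w), ?_⟩
    intro u
    by_contra hu
    obtain ⟨w, hw1, hw2⟩ := hf.2 u
    by_cases hwv : w = v
    · subst hwv
      have : u ∈ PB G f w := ⟨hw2, hu⟩
      rw [hempty] at this; exact this
    · exact hu ⟨w, by simpa [hf', Function.update_of_ne hwv] using hw1,
        by simpa [hf', Function.update_of_ne hwv] using hw2⟩
  · intro hPB
    refine ⟨hf, fun f' hlt hf' => ?_⟩
    rw [Pi.lt_def] at hlt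
    obtain ⟨hle, v, hv⟩ := hlt
    have hfv : 0 < f v := lt_of_le_of_lt (Nat.zero_le _) hv
    obtain ⟨u, hu1, hu2⟩ := hPB v hfv
    obtain ⟨w, hw1, hw2⟩ := hf'.2 u
    apply hu2
    by_cases hwv : w = v
    · subst hwv
      refine ⟨w, ?_, ?_⟩
      · simpa using le_trans hw1 (Nat.le_sub_one_of_lt hv)
      · simpa using le_trans hw2 (Nat.le_sub_one_of_lt hv)
    · exact ⟨w, by simpa [Function.update_of_ne hwv] using le_trans hw1 (hle w),
        by simpa [Function.update_of_ne hwv] using le_trans hw2 (hle w)⟩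

end AJC
end

section
/- Let f be a broadcast on a graph G, and let u₁ ≠ u₂ be broadcast vertices with u₁' ∈ PB_f(u₁) and u₂' ∈ PB_f(u₂). If P₁ is a u₁–u₁' geodesic and P₂ is a u₂–u₂' geodesic, then P₁ and P₂ are vertex-disjoint. -/
/-!
If `x` lay on both geodesics, then `d(u₁, x) + d(x, u₁') ≤ f u₁` and `d(u₂, x) + d(x, u₂') ≤ f u₂`.
Since `u₁'` does not hear `u₂`, `f u₂ < d(u₂, u₁') ≤ d(u₂, x) + d(x, u₁')`, and symmetrically
`f u₁ < d(u₁, x) + d(x, u₂')`; adding the four inequalities gives `f u₁ + f u₂ < f u₁ + f u₂`.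
-/

namespace AJC

variable {V : Type*}

theorem _root_.SimpleGraph.Walk.dist_add_dist_le_length [DecidableEq V] {G : SimpleGraph V}
    {u v x : V} (p : G.Walk u v) (hx : x ∈ p.support) :
    G.dist u x + G.dist x v ≤ p.length :=
  calc G.dist u x + G.dist x v
      ≤ (p.takeUntil x hx).length + (p.dropUntil x hx).length :=
        add_le_add (G.dist_le _) (G.dist_le _)
    _ = p.length := by rw [← SimpleGraph.Walk.length_append, p.take_spec]

theorem lt_dist_of_mem_PB [DecidableEq V] {G : SimpleGraph V} {f : V → ℕ} {v w u : V}
    (hu : u ∈ PB G f v) (hwv : w ≠ v) (hw : 0 < f w) : f w < G.dist w u := by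
  by_contra! hle
  exact hu.2 ⟨w, by simpa [Function.update_of_ne hwv], by simpa [Function.update_of_ne hwv]⟩

theorem stmt2_general {V : Type*} [DecidableEq V] (G : SimpleGraph V)
    (f : V → ℕ)
    (u₁ u₂ u₁' u₂' : V) (hne : u₁ ≠ u₂) (h₁ : 0 < f u₁) (h₂ : 0 < f u₂)
    (hb₁ : u₁' ∈ PB G f u₁) (hb₂ : u₂' ∈ PB G f u₂)
    (p₁ : G.Walk u₁ u₁') (p₂ : G.Walk u₂ u₂')
    (hlen₁ : p₁.length = G.dist u₁ u₁')
    (hlen₂ : p₂.length = G.dist u₂ u₂') :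
    ∀ x, x ∈ p₁.support → x ∉ p₂.support := by
  intro x hx₁ hx₂
  have split₁ : G.dist u₁ x + G.dist x u₁' ≤ f u₁ :=
    (hlen₁ ▸ p₁.dist_add_dist_le_length hx₁).trans hb₁.1
  have split₂ : G.dist u₂ x + G.dist x u₂' ≤ f u₂ :=
    (hlen₂ ▸ p₂.dist_add_dist_le_length hx₂).trans hb₂.1
  have far₁ : f u₂ < G.dist u₂ u₁' := lt_dist_of_mem_PB hb₁ hne.symm h₂
  have far₂ : f u₁ < G.dist u₁ u₂' := lt_dist_of_mem_PB hb₂ hne h₁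
  have tri₁ := (p₂.takeUntil x hx₂).reachable.dist_triangle_left u₁'
  have tri₂ := (p₁.takeUntil x hx₁).reachable.dist_triangle_left u₂'
  omega

/-- Geodesics from distinct broadcast vertices to their private boundary
vertices are vertex-disjoint. -/
theorem stmt2 {V : Type*} [Fintype V] [DecidableEq V] (G : SimpleGraph V)
    (hconn : G.Connected) (f : V → ℕ) (hf : IsBroadcast G f)
    (u₁ u₂ u₁' u₂' : V) (hne : u₁ ≠ u₂) (h₁ : 0 < f u₁) (h₂ : 0 < f u₂)
    (hb₁ : u₁' ∈ PB G f u₁) (hb₂ : u₂' ∈ PB G f u₂)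
    (p₁ : G.Walk u₁ u₁') (p₂ : G.Walk u₂ u₂')
    (hp₁ : p₁.IsPath) (hlen₁ : p₁.length = G.dist u₁ u₁')
    (hp₂ : p₂.IsPath) (hlen₂ : p₂.length = G.dist u₂ u₂') :
    ∀ x, x ∈ p₁.support → x ∉ p₂.support :=
  stmt2_general G f u₁ u₂ u₁' u₂' hne h₁ h₂ hb₁ hb₂ p₁ p₂ hlen₁ hlen₂

end AJC
end

section
/- For every connected graph G, the upper broadcast domination number satisfies Γ_b(G) ≤ |E(G)|. -/
namespace AJC

variable {V : Type*}

private lemma walk_edge_split {V : Type*} {G : SimpleGraph V} {a b : V} (p : G.Walk a b) :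
    ∀ e ∈ p.edges, ∃ x y, e = s(x, y) ∧ G.Adj x y ∧
      ∃ (q : G.Walk a x) (r : G.Walk y b), q.length + 1 + r.length = p.length := by
  induction p with
  | nil => simp
  | @cons a c b h q ih =>
    intro e he
    rw [SimpleGraph.Walk.edges_cons, List.mem_cons] at he
    rcases he with rfl | he
    · exact ⟨a, c, rfl, h, SimpleGraph.Walk.nil, q, by simp [Nat.add_comm]⟩
    · obtain ⟨x, y, rfl, hxy, q', r, hl⟩ := ih e he
      refine ⟨x, y, rfl, hxy, SimpleGraph.Walk.cons h q', r, ?_⟩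
      simp only [SimpleGraph.Walk.length_cons]
      omega

private lemma geodesic_edge {V : Type*} {G : SimpleGraph V} (hconn : G.Connected)
    {v t : V} (p : G.Walk v t) (hlen : p.length = G.dist v t) {e : Sym2 V} (he : e ∈ p.edges) :
    ∃ x y, e = s(x, y) ∧ G.dist v x + 1 + G.dist y t = G.dist v t ∧
      G.dist v y = G.dist v x + 1 ∧ G.dist x t = G.dist y t + 1 := by
  obtain ⟨x, y, rfl, hxy, q, r, hl⟩ := walk_edge_split p _ he
  have h1 : G.dist v x ≤ q.length := SimpleGraph.dist_le q
  have h2 : G.dist y t ≤ r.length := SimpleGraph.dist_le r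
  have hxy1 : G.dist x y ≤ 1 := by
    simpa using SimpleGraph.dist_le (SimpleGraph.Walk.cons hxy SimpleGraph.Walk.nil)
  have t1 := hconn.dist_triangle (u := v) (v := y) (w := t)
  have t2 := hconn.dist_triangle (u := v) (v := x) (w := y)
  have t4 := hconn.dist_triangle (u := v) (v := x) (w := t)
  have t5 := hconn.dist_triangle (u := x) (v := y) (w := t)
  exact ⟨x, y, rfl, by omega, by omega, by omega⟩

/-- `Γ_b(G) ≤ |E(G)|` for every connected graph. -/
theorem stmt3 {V : Type*} [Fintype V] [DecidableEq V] (G : SimpleGraph V)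
    [DecidableRel G.Adj] (hconn : G.Connected) :
    upperBroadcastNum G ≤ G.edgeFinset.card := by
  classical
  apply csSup_le'
  rintro n ⟨f, ⟨⟨hbc, hdom⟩, hmin⟩, rfl⟩
  -- Step 1: for each broadcasting vertex, a private vertex
  have Hu : ∀ v, 1 ≤ f v → ∃ u : V,
      (∀ w, w ≠ v → 1 ≤ f w → f w < G.dist w u) ∧
      (G.dist v u = f v ∨ (u = v ∧ f v = 1)) := by
    intro v hv
    set f' : V → ℕ := Function.update f v (f v - 1) with hf'def
    have hle : f' ≤ f := by
      intro w
      by_cases hw : w = v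
      · subst hw; simp [hf'def]
      · simp [hf'def, Function.update_of_ne hw]
    have hlt : f' < f := by
      refine lt_of_le_of_ne hle ?_
      intro h
      have := congrFun h v
      simp [hf'def] at this
      omega
    have hbc' : IsBroadcast G f' := by
      intro w
      exact le_trans (hle w) (hbc w)
    have hnd := hmin f' hlt
    have hex : ∃ u, ¬ Hears G f' u := by
      by_contra h
      push_neg at h
      exact hnd ⟨hbc', h⟩
    obtain ⟨u, hu⟩ := hex
    have hnh : ∀ w, ¬ (1 ≤ f' w ∧ G.dist w u ≤ f' w) := by
      intro w hw; exact hu ⟨w, hw⟩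
    have hpriv : ∀ w, w ≠ v → 1 ≤ f w → f w < G.dist w u := by
      intro w hw hfw
      by_contra h
      push_neg at h
      exact hnh w ⟨by simpa [hf'def, Function.update_of_ne hw] using hfw,
        by simpa [hf'def, Function.update_of_ne hw] using h⟩
    have hvu : G.dist v u ≤ f v := by
      obtain ⟨w, hw1, hw2⟩ := hdom u
      by_cases hwv : w = v
      · subst hwv; exact hw2
      · exact absurd (hw2.trans (le_of_lt (hpriv w hwv hw1))) (lt_irrefl _ (lt_of_le_of_lt hw2 (hpriv w hwv hw1))).elim
    refine ⟨u, hpriv, ?_⟩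
    by_cases h2 : 2 ≤ f v
    · left
      have := hnh v
      have hfv' : f' v = f v - 1 := by simp [hf'def]
      rw [hfv'] at this
      push_neg at this
      have := this (by omega)
      omega
    · have hfv1 : f v = 1 := by omega
      by_cases hz : G.dist v u = 0
      · right
        exact ⟨((hconn v u).dist_eq_zero_iff.mp hz).symm, hfv1⟩
      · left; omega
  -- Step 2: for each broadcasting vertex, a set of f v edges
  have HE : ∀ v : V, ∃ (E : Finset (Sym2 V)) (u : V), 1 ≤ f v →
      (E.card = f v ∧ (∀ e ∈ E, e ∈ G.edgeSet) ∧
       (∀ w, w ≠ v → 1 ≤ f w → f w < G.dist w u) ∧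
       (∀ e ∈ E, (∃ x y, e = s(x, y) ∧ G.dist v x + 1 + G.dist y u = f v ∧
           G.dist v y = G.dist v x + 1 ∧ G.dist x u = G.dist y u + 1) ∨
         (u = v ∧ ∃ z, e = s(v, z) ∧ G.Adj v z))) := by
    intro v
    by_cases hv : 1 ≤ f v
    swap
    · exact ⟨∅, v, fun h => absurd h hv⟩
    obtain ⟨u, hpriv, hcase⟩ := Hu v hv
    rcases hcase with hd | ⟨huv, hf1⟩
    · -- normal case: geodesic to u
      obtain ⟨p0, hp0⟩ := (hconn v u).exists_walk_length_eq_dist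
      set p : G.Walk v u := p0.bypass with hpdef
      have hpath : p.IsPath := p0.bypass_isPath
      have hplen : p.length = G.dist v u :=
        le_antisymm (le_trans (p0.length_bypass_le) (le_of_eq hp0)) (SimpleGraph.dist_le p)
      refine ⟨p.edges.toFinset, u, fun _ => ⟨?_, ?_, hpriv, ?_⟩⟩
      · rw [List.toFinset_card_of_nodup hpath.edges_nodup, p.length_edges, hplen, hd]
      · intro e he
        exact p.edges_subset_edgeSet (List.mem_toFinset.mp he)
      · intro e he
        obtain ⟨x, y, hexy, hA, hB, hC⟩ := geodesic_edge hconn p hplen (List.mem_toFinset.mp he)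
        exact Or.inl ⟨x, y, hexy, by rw [← hd]; exact hA, hB, hC⟩
    · -- degenerate case: u = v, f v = 1; pick a neighbour
      subst huv
      have hecc : 1 ≤ ecc G u := le_trans hv (hbc u)
      have hzex : ∃ z : V, 1 ≤ G.dist u z := by
        by_contra h
        push_neg at h
        have : ecc G u = 0 := by
          refine Nat.le_zero.mp (Finset.sup_le ?_)
          intro w _
          have := h w
          omega
        omega
      obtain ⟨z, hz⟩ := hzex
      obtain ⟨p0, hp0⟩ := (hconn u z).exists_walk_length_eq_dist
      cases p0 with
      | nil =>
        rw [SimpleGraph.dist_self] at hz; omega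
      | cons hadj q =>
        rename_i c
        refine ⟨{s(u, c)}, u, fun _ => ⟨?_, ?_, hpriv, ?_⟩⟩
        · simp [hf1]
        · intro e he
          rw [Finset.mem_singleton] at he
          subst he
          exact hadj
        · intro e he
          rw [Finset.mem_singleton] at he
          exact Or.inr ⟨rfl, c, he, hadj⟩
  choose Ef uf hEf using HE
  set B : Finset V := Finset.univ.filter (fun v => 1 ≤ f v) with hBdef
  have hmemB : ∀ v, v ∈ B → 1 ≤ f v := by
    intro v hv
    simpa [hBdef] using hv
  have hadj_dist : ∀ {a b : V}, G.Adj a b → G.dist a b ≤ 1 := by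
    intro a b h
    simpa using SimpleGraph.dist_le (SimpleGraph.Walk.cons h SimpleGraph.Walk.nil)
  -- disjointness
  have hdisj : ∀ v ∈ B, ∀ w ∈ B, v ≠ w → Disjoint (Ef v) (Ef w) := by
    intro v hv w hw hne
    have hfv := hmemB v hv
    have hfw := hmemB w hw
    obtain ⟨_, _, hprivv, hPv⟩ := hEf v hfv
    obtain ⟨_, _, hprivw, hPw⟩ := hEf w hfw
    refine Finset.disjoint_left.mpr fun e hev hew => ?_
    have P1 : f w < G.dist w (uf v) := hprivv w (Ne.symm hne) hfw
    have P2 : f v < G.dist v (uf w) := hprivw v hne hfv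
    rcases hPv e hev with ⟨x, y, hexy, hA, hB, hC⟩ | ⟨huv, z, hez, hadjz⟩ <;>
      rcases hPw e hew with ⟨x', y', hexy', hA', hB', hC'⟩ | ⟨huw, z', hez', hadjz'⟩
    · -- both normal
      rw [hexy] at hexy'
      rcases Sym2.eq_iff.mp hexy' with ⟨hx, hy⟩ | ⟨hx, hy⟩
      · subst hx; subst hy
        have T1 := hconn.dist_triangle (u := w) (v := x) (w := uf v)
        have T2 := hconn.dist_triangle (u := v) (v := y) (w := uf w)
        omega
      · subst hx; subst hy
        have T1 := hconn.dist_triangle (u := w) (v := y) (w := uf v)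
        have T2 := hconn.dist_triangle (u := v) (v := x) (w := uf w)
        omega
    · -- v normal, w degenerate
      rw [hexy] at hez'
      rw [huw] at P2
      rcases Sym2.eq_iff.mp hez' with ⟨hx, hy⟩ | ⟨hx, hy⟩
      · subst hx; omega
      · subst hy; omega
    · -- v degenerate, w normal
      rw [hez] at hexy'
      rw [huv] at P1
      rcases Sym2.eq_iff.mp hexy' with ⟨hx, hy⟩ | ⟨hx, hy⟩
      · subst hx; omega
      · subst hx; omega
    · -- both degenerate
      rw [hez] at hez'
      rw [huw] at P2
      rcases Sym2.eq_iff.mp hez' with ⟨hx, hy⟩ | ⟨hx, hy⟩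
      · exact hne hx
      · subst hy
        have := hadj_dist hadjz
        omega
  have hcost : cost f = ∑ v ∈ B, f v := by
    rw [cost, hBdef]
    exact (Finset.sum_filter_of_ne (fun x _ hx => by omega)).symm
  rw [hcost]
  calc ∑ v ∈ B, f v = ∑ v ∈ B, (Ef v).card :=
        Finset.sum_congr rfl (fun v hv => ((hEf v (hmemB v hv)).1).symm)
    _ = (B.biUnion Ef).card := (Finset.card_biUnion hdisj).symm
    _ ≤ G.edgeFinset.card := by
        apply Finset.card_le_card
        refine Finset.biUnion_subset.mpr fun v hv => fun e he => ?_
        exact SimpleGraph.mem_edgeFinset.mpr ((hEf v (hmemB v hv)).2.1 e he)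


end AJC
end

section
/- For every path P_n with n ≥ 2 vertices, Γ_b(P_n) = n − 1 = diam(P_n). -/
namespace AJC

variable {V : Type*}

open SimpleGraph Finset

lemma pg_walk_le {n : ℕ} {i j : Fin n} (p : (pathGraph n).Walk i j) :
    Nat.dist i.val j.val ≤ p.length := by
  induction p with
  | nil => simp [Nat.dist]
  | @cons a b c h p ih =>
    have hab : Nat.dist a.val b.val ≤ 1 := by
      have := (pathGraph_adj).1 h
      simp [Nat.dist]; omega
    have htri := Nat.dist.triangle_inequality a.val b.val c.val
    simp only [SimpleGraph.Walk.length_cons]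
    omega

lemma pg_dist_le {n : ℕ} : ∀ (k : ℕ) (i j : Fin n), Nat.dist i.val j.val = k →
    (pathGraph n).dist i j ≤ k := by
  intro k
  induction k with
  | zero => intro i j h
            have : i = j := Fin.ext (Nat.eq_of_dist_eq_zero h)
            simp [this]
  | succ k ih =>
    intro i j h
    have hne : i.val ≠ j.val := by simp [Nat.dist] at h; omega
    set i' : Fin n := if h' : i.val < j.val then ⟨i.val + 1, by omega⟩
      else ⟨i.val - 1, by omega⟩ with hi'
    have hadj : (pathGraph n).Adj i i' := by
      rw [pathGraph_adj]
      by_cases h' : i.val < j.val <;> simp [hi', h'] <;> omega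
    have hd : Nat.dist i'.val j.val = k := by
      by_cases h' : i.val < j.val <;> simp [hi', h', Nat.dist] at h ⊢ <;> omega
    calc (pathGraph n).dist i j ≤ (pathGraph n).dist i i' + (pathGraph n).dist i' j := by
          rcases n with _ | m
          · exact i.elim0
          · exact (pathGraph_connected m).dist_triangle
      _ ≤ k + 1 := by
          have := ih i' j hd
          have h1 : (pathGraph n).dist i i' = 1 := (dist_eq_one_iff_adj).2 hadj
          omega

lemma pg_dist {n : ℕ} (i j : Fin n) : (pathGraph n).dist i j = Nat.dist i.val j.val := by
  refine le_antisymm (pg_dist_le _ i j rfl) ?_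
  have hr : (pathGraph n).Reachable i j := by
    rcases n with _ | m
    · exact i.elim0
    · exact (pathGraph_connected m) i j
  obtain ⟨p, hp⟩ := hr.exists_walk_length_eq_dist
  calc Nat.dist i.val j.val ≤ p.length := pg_walk_le p
    _ = _ := hp

lemma key_spec {n : ℕ} (f : Fin n → ℕ)
    (hf : IsMinDomBroadcast (SimpleGraph.pathGraph n) f) :
    ∀ v : Fin n, ∃ u : Fin n, 1 ≤ f v →
      ((∀ w, w ≠ v → 1 ≤ f w → f w < Nat.dist w.val u.val) ∧
       (Nat.dist v.val u.val = f v ∨ (f v = 1 ∧ u = v))) := by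
  intro v
  by_cases hv : 1 ≤ f v
  · set f' : Fin n → ℕ := Function.update f v (f v - 1) with hf'
    have hlt : f' < f := by
      rw [Pi.lt_def]
      refine ⟨fun x => ?_, ⟨v, by simp [hf']; omega⟩⟩
      by_cases hx : x = v
      · subst hx; simp [hf']
      · simp [hf', Function.update_of_ne hx]
    have hbr : IsBroadcast (SimpleGraph.pathGraph n) f' := by
      intro x
      by_cases hx : x = v
      · subst hx; simp only [hf', Function.update_self]
        exact le_trans (by omega) (hf.1.1 x)
      · rw [hf', Function.update_of_ne hx]; exact hf.1.1 x
    have hnall : ¬ ∀ u, Hears (SimpleGraph.pathGraph n) f' u :=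
      fun h => hf.2 f' hlt ⟨hbr, h⟩
    push_neg at hnall
    obtain ⟨u, hu⟩ := hnall
    simp only [Hears, not_exists, not_and, not_le] at hu
    obtain ⟨w₀, hw1, hw2⟩ := hf.1.2 u
    have hw0 : w₀ = v := by
      by_contra hne
      have := hu w₀
      rw [hf', Function.update_of_ne hne] at this
      exact absurd hw2 (not_le.2 (this hw1))
    rw [hw0] at hw2
    rw [pg_dist] at hw2
    have hpriv : ∀ w, w ≠ v → 1 ≤ f w → f w < Nat.dist w.val u.val := by
      intro w hne hw
      have := hu w
      rw [hf', Function.update_of_ne hne, pg_dist] at this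
      exact this hw
    refine ⟨u, fun _ => ⟨hpriv, ?_⟩⟩
    have hvv := hu v
    rw [hf', Function.update_self, pg_dist] at hvv
    by_cases hcase : Nat.dist v.val u.val = f v
    · exact Or.inl hcase
    · right
      have h0 : Nat.dist v.val u.val = 0 ∧ f v = 1 := by
        by_cases h1 : 1 ≤ f v - 1
        · have := hvv h1; omega
        · omega
      exact ⟨h0.2, Fin.ext (Nat.eq_of_dist_eq_zero h0.1).symm⟩
  · exact ⟨v, fun h => absurd h hv⟩

lemma cost_le {n : ℕ} (hn : 2 ≤ n) (f : Fin n → ℕ)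
    (hf : IsMinDomBroadcast (SimpleGraph.pathGraph n) f) : cost f ≤ n - 1 := by
  classical
  choose b hb using key_spec f hf
  set S : Finset (Fin n) := Finset.univ.filter (fun v => 1 ≤ f v) with hS
  set C : Fin n → Finset ℕ := fun v =>
    if Nat.dist v.val (b v).val = f v then
      Finset.Ico (min v.val (b v).val) (max v.val (b v).val)
    else if v.val + 1 < n then {v.val} else {v.val - 1} with hC
  have hmemS : ∀ v, v ∈ S → 1 ≤ f v := by
    intro v hv; exact (Finset.mem_filter.1 hv).2
  have hcard : ∀ v ∈ S, (C v).card = f v := by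
    intro v hv
    obtain ⟨hpriv, hdisj⟩ := hb v (hmemS v hv)
    rw [hC]
    by_cases hg : Nat.dist v.val (b v).val = f v
    · simp only [hg, if_true, Nat.card_Ico]
      simp [Nat.dist] at hg ⊢; omega
    · have hbad : f v = 1 ∧ b v = v := hdisj.resolve_left hg
      simp only [hg, if_false]
      by_cases h' : v.val + 1 < n <;> simp [h', hbad.1]
  have hsub : ∀ v ∈ S, C v ⊆ Finset.range (n - 1) := by
    intro v hv k hk
    simp only [hC] at hk
    have h1 : v.val < n := v.isLt
    have h2 : (b v).val < n := (b v).isLt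
    simp only [Finset.mem_range]
    split_ifs at hk with hg h' <;> simp only [Finset.mem_Ico, Finset.mem_singleton] at hk <;> omega
  have hdisjoint : ∀ v ∈ S, ∀ w ∈ S, v ≠ w → Disjoint (C v) (C w) := by
    intro v hv w hw hvw
    obtain ⟨pv, dv⟩ := hb v (hmemS v hv)
    obtain ⟨pw, dw⟩ := hb w (hmemS w hw)
    have hfv := hmemS v hv
    have hfw := hmemS w hw
    have h1 : v.val < n := v.isLt
    have h2 : (b v).val < n := (b v).isLt
    have h3 : w.val < n := w.isLt
    have h4 : (b w).val < n := (b w).isLt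
    have hne : v.val ≠ w.val := fun h => hvw (Fin.ext h)
    rw [Finset.disjoint_left]
    intro k hkv hkw
    simp only [hC] at hkv hkw
    by_cases hgv : Nat.dist v.val (b v).val = f v <;>
      by_cases hgw : Nat.dist w.val (b w).val = f w
    · -- both good
      have hpv := pv w (Ne.symm hvw) hfw   -- f w < dist w (b v)
      have hpw := pw v hvw hfv             -- f v < dist v (b w)
      simp only [hgv, hgw, if_true] at hkv hkw
      simp only [Finset.mem_Ico] at hkv hkw
      simp [Nat.dist] at hgv hgw hpv hpw
      omega
    · -- v good, w bad
      obtain ⟨hfw1, hbw⟩ := dw.resolve_left hgw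
      have hpw := pw v hvw hfv   -- f v < dist v (b w) = dist v w
      rw [hbw] at hpw
      simp only [hgv, if_true, hgw, if_false] at hkv hkw
      simp only [Finset.mem_Ico] at hkv
      split_ifs at hkw with h' <;> simp only [Finset.mem_singleton] at hkw <;>
        (simp [Nat.dist] at hgv hpw; omega)
    · -- v bad, w good
      obtain ⟨hfv1, hbv⟩ := dv.resolve_left hgv
      have hpv := pv w (Ne.symm hvw) hfw
      rw [hbv] at hpv
      simp only [hgw, if_true, hgv, if_false] at hkv hkw
      simp only [Finset.mem_Ico] at hkw
      split_ifs at hkv with h' <;> simp only [Finset.mem_singleton] at hkv <;>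
        (simp [Nat.dist] at hgw hpv; omega)
    · -- both bad
      obtain ⟨hfv1, hbv⟩ := dv.resolve_left hgv
      obtain ⟨hfw1, hbw⟩ := dw.resolve_left hgw
      have hpv := pv w (Ne.symm hvw) hfw
      rw [hbv] at hpv
      simp only [hgv, hgw, if_false] at hkv hkw
      split_ifs at hkv hkw <;> simp only [Finset.mem_singleton] at hkv hkw <;>
        (simp [Nat.dist] at hpv; omega)
  have hsum : cost f = ∑ v ∈ S, f v := by
    rw [cost, hS]
    exact (Finset.sum_filter_of_ne (fun x _ hx => by omega)).symm
  calc cost f = ∑ v ∈ S, f v := hsum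
    _ = ∑ v ∈ S, (C v).card := Finset.sum_congr rfl (fun v hv => (hcard v hv).symm)
    _ = (S.biUnion C).card := (Finset.card_biUnion hdisjoint).symm
    _ ≤ (Finset.range (n - 1)).card :=
        Finset.card_le_card (Finset.biUnion_subset.2 hsub)
    _ = n - 1 := Finset.card_range _


/-- `Γ_b(P_n) = n - 1 = diam(P_n)` for `n ≥ 2`. -/
theorem stmt4 (n : ℕ) (hn : 2 ≤ n) :
    upperBroadcastNum (SimpleGraph.pathGraph n) = n - 1 ∧
    diam (SimpleGraph.pathGraph n) = n - 1 := by
  classical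
  have hnz : 0 < n := by omega
  set v0 : Fin n := ⟨0, hnz⟩ with hv0
  set vl : Fin n := ⟨n - 1, by omega⟩ with hvl
  have hecc_le : ∀ v : Fin n, ecc (pathGraph n) v ≤ n - 1 := by
    intro v
    apply Finset.sup_le
    intro u _
    rw [pg_dist]
    have := v.isLt; have := u.isLt
    simp [Nat.dist]; omega
  have hecc0 : n - 1 ≤ ecc (pathGraph n) v0 := by
    have : (pathGraph n).dist v0 vl = n - 1 := by
      rw [pg_dist]; simp [hv0, hvl, Nat.dist]
    calc n - 1 = (pathGraph n).dist v0 vl := this.symm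
      _ ≤ _ := Finset.le_sup (Finset.mem_univ vl)
  have hdiam : diam (SimpleGraph.pathGraph n) = n - 1 := by
    apply le_antisymm
    · exact Finset.sup_le fun v _ => hecc_le v
    · exact le_trans hecc0 (Finset.le_sup (Finset.mem_univ v0))
  -- the minimal dominating broadcast of cost n - 1
  set f₀ : Fin n → ℕ := fun u => if u = v0 then n - 1 else 0 with hf₀
  have hcost₀ : cost f₀ = n - 1 := by
    rw [cost, hf₀]
    rw [Finset.sum_ite_eq' Finset.univ v0 (fun _ => n - 1)]
    simp
  have hdom₀ : IsDomBroadcast (pathGraph n) f₀ := by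
    constructor
    · intro x
      by_cases hx : x = v0
      · subst hx; simp only [hf₀, if_pos rfl]; exact hecc0
      · simp [hf₀, hx]
    · intro u
      refine ⟨v0, by simp [hf₀]; omega, ?_⟩
      rw [pg_dist]
      have := u.isLt
      simp [hf₀, hv0, Nat.dist]; omega
  have hmin₀ : IsMinDomBroadcast (pathGraph n) f₀ := by
    refine ⟨hdom₀, ?_⟩
    intro f' hlt hdom'
    rw [Pi.lt_def] at hlt
    obtain ⟨hle, i, hi⟩ := hlt
    have hzero : ∀ x, x ≠ v0 → f' x = 0 := by
      intro x hx
      have := hle x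
      simp [hf₀, hx] at this
      omega
    have hi0 : f' v0 < n - 1 := by
      by_cases hiv : i = v0
      · subst hiv; simpa [hf₀] using hi
      · have := hzero i hiv; simp [hf₀, hiv] at hi
    obtain ⟨w, hw1, hw2⟩ := hdom'.2 vl
    have hwv : w = v0 := by
      by_contra hne
      rw [hzero w hne] at hw1; omega
    rw [hwv, pg_dist] at hw2
    have h9 : Nat.dist v0.val vl.val = n - 1 := by
      simp [hv0, hvl, Nat.dist]
    rw [h9] at hw2
    omega
  have hmem : (n - 1) ∈ {m | ∃ f : Fin n → ℕ,
      IsMinDomBroadcast (pathGraph n) f ∧ cost f = m} := ⟨f₀, hmin₀, hcost₀⟩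
  have hub : ∀ m ∈ {m | ∃ f : Fin n → ℕ,
      IsMinDomBroadcast (pathGraph n) f ∧ cost f = m}, m ≤ n - 1 := by
    rintro m ⟨f, hf, rfl⟩
    exact cost_le hn f hf
  refine ⟨le_antisymm ?_ ?_, hdiam⟩
  · exact csSup_le ⟨n - 1, hmem⟩ hub
  · exact le_csSup ⟨n - 1, hub⟩ hmem

end AJC
end

section
/- For any connected graph G, diam(G) ≤ Γ_b(G); that is, the upper broadcast domination number is at least the diameter. -/
namespace AJC

variable {V : Type*}

/-- `diam(G) ≤ Γ_b(G)` for every connected graph. -/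
theorem stmt5 {V : Type*} [Fintype V] (G : SimpleGraph V) (hconn : G.Connected) :
    diam G ≤ upperBroadcastNum G := by
  classical
  rcases Nat.eq_zero_or_pos (diam G) with h0 | hpos
  · simp [h0]
  -- V is nonempty
  have hne : (Finset.univ : Finset V).Nonempty := by
    rcases hconn.nonempty with ⟨v⟩
    exact ⟨v, Finset.mem_univ v⟩
  -- choose v attaining the diameter
  obtain ⟨v, -, hv⟩ := Finset.exists_mem_eq_sup Finset.univ hne (fun v => ecc G v)
  have heccv : ecc G v = diam G := hv.symm
  have heccpos : 1 ≤ ecc G v := heccv ▸ hpos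
  -- the broadcast
  set f : V → ℕ := fun u => if u = v then ecc G v else 0 with hf
  have hfv : f v = ecc G v := by simp [hf]
  have hfother : ∀ u, u ≠ v → f u = 0 := by intro u hu; simp [hf, hu]
  have hdistle : ∀ u, G.dist v u ≤ ecc G v :=
    fun u => Finset.le_sup (Finset.mem_univ u)
  -- there is a vertex at distance ecc G v
  obtain ⟨w, -, hw⟩ := Finset.exists_mem_eq_sup Finset.univ hne (fun u => G.dist v u)
  have hwd : G.dist v w = ecc G v := hw.symm
  have hdom : IsDomBroadcast G f := by
    constructor
    · intro u
      by_cases hu : u = v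
      · subst hu; simp [hfv]
      · simp [hfother u hu]
    · intro u
      exact ⟨v, by rw [hfv]; exact heccpos, by rw [hfv]; exact hdistle u⟩
  have hmin : IsMinDomBroadcast G f := by
    refine ⟨hdom, ?_⟩
    intro f' hlt hdom'
    have hle : f' ≤ f := le_of_lt hlt
    have hother0 : ∀ u, u ≠ v → f' u = 0 := by
      intro u hu
      have := Pi.le_def.mp hle u
      rw [hfother u hu] at this
      omega
    have hfv' : f' v < ecc G v := by
      rcases lt_or_eq_of_le (Pi.le_def.mp hle v) with h | h
      · rw [hfv] at h; exact h
      · exfalso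
        apply ne_of_lt hlt
        funext u
        by_cases hu : u = v
        · subst hu; exact h
        · rw [hother0 u hu, hfother u hu]
    -- w is not heard by f'
    obtain ⟨x, hx1, hx2⟩ := hdom'.2 w
    by_cases hx : x = v
    · subst hx
      rw [hwd] at hx2
      omega
    · rw [hother0 x hx] at hx1
      omega
  have hcost : cost f = ecc G v := by
    simp [cost, hf]
  have hbdd : BddAbove {n | ∃ g : V → ℕ, IsMinDomBroadcast G g ∧ cost g = n} := by
    refine ⟨∑ u : V, ecc G u, ?_⟩
    rintro n ⟨g, hg, rfl⟩
    exact Finset.sum_le_sum (fun u _ => hg.1.1 u)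
  calc diam G = cost f := by rw [hcost, heccv]
    _ ≤ upperBroadcastNum G := le_csSup hbdd ⟨f, hmin, rfl⟩

end AJC
end

section
/- Let T be a tree with diameter d ≥ 3 and diametrical path v₀,v₁,...,v_d. If there exists i ∈ {1,...,d−2} such that v_i is adjacent to a leaf other than v₀, and v_{i+1} is adjacent to a leaf other than v_d, then Γ_b(T) > diam(T). -/
namespace SimpleGraph

variable {V : Type*} {G : SimpleGraph V}

theorem ne_of_lt_dist {u v : V} {r : ℕ} (h : r < G.dist u v) : u ≠ v := by
  rintro rfl
  simp at h

theorem IsTree.length_eq_dist (hT : G.IsTree) {a b : V} {p : G.Walk a b} (hp : p.IsPath) :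
    p.length = G.dist a b := by
  obtain ⟨q, hq, hql⟩ := hT.connected.exists_path_of_dist a b
  rw [← hql, (hT.existsUnique_path a b).unique hp hq]

theorem IsTree.dist_eq_sub_of_adj_of_injOn (hT : G.IsTree) {u : ℕ → V} {n : ℕ}
    (hadj : ∀ j < n, G.Adj (u j) (u (j + 1))) (hinj : Set.InjOn u (Set.Iic n))
    {j k : ℕ} (hjk : j ≤ k) (hkn : k ≤ n) : G.dist (u j) (u k) = k - j := by
  set l := List.ofFn fun m : Fin (k - j + 1) => u (j + m)
  have hne : l ≠ [] := by simp [l]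
  have hchain : l.IsChain G.Adj := List.isChain_ofFn.mpr fun m hm => hadj (j + m) (by omega)
  have hp : (Walk.ofSupport l hne hchain).IsPath := by
    rw [Walk.isPath_def, Walk.support_ofSupport, List.nodup_ofFn]
    intro m m' hmm'
    have := hinj (Set.mem_Iic.mpr (by omega : j + m ≤ n)) (Set.mem_Iic.mpr (by omega)) hmm'
    exact Fin.ext (by omega)
  have := hT.length_eq_dist hp
  rw [Walk.length_ofSupport, List.length_ofFn, List.head_ofFn, List.getLast_ofFn] at this
  simpa [Nat.add_sub_cancel' hjk] using this.symm

end SimpleGraph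

namespace AJC

variable {V : Type*}

section

-- Closed before `stmt6`, where `diam` must mean `AJC.diam`, not `SimpleGraph.diam`.
open SimpleGraph Finset

section Leaves

variable [Fintype V] {G : SimpleGraph V} [DecidableRel G.Adj] {l w : V}

theorem IsLeaf.eq_of_adj (hl : IsLeaf G l) (hw : G.Adj w l) {w' : V} (hw' : G.Adj w' l) :
    w' = w :=
  (degree_eq_one_iff_existsUnique_adj.mp hl).unique hw'.symm hw.symm

theorem IsLeaf.eq_or_eq_of_dist_le_one (hc : G.Connected) (hl : IsLeaf G l) (hw : G.Adj w l)
    {s : V} (hs : G.dist s l ≤ 1) : s = l ∨ s = w := by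
  rcases Nat.le_one_iff_eq_zero_or_eq_one.mp hs with h | h
  · exact Or.inl (hc.dist_eq_zero_iff.mp h)
  · exact Or.inr (hl.eq_of_adj hw (dist_eq_one_iff_adj.mp h))

/-- Every walk into a leaf enters through its unique neighbour. -/
theorem IsLeaf.dist_eq_dist_add_one (hc : G.Connected) (hl : IsLeaf G l) (hw : G.Adj w l)
    {a : V} (ha : a ≠ l) : G.dist a l = G.dist a w + 1 := by
  refine le_antisymm ?_ ?_
  · simpa [dist_eq_one_iff_adj.mpr hw] using hc.dist_triangle (u := a) (v := w) (w := l)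
  obtain ⟨p, hp⟩ := hc.exists_walk_length_eq_dist l a
  rw [dist_comm (u := a) (v := l), ← hp, dist_comm]
  cases p with
  | nil => exact absurd rfl ha
  | cons h q =>
    obtain rfl := hl.eq_of_adj hw h.symm
    exact Nat.succ_le_succ (dist_le q)

variable {d : ℕ} {v : ℕ → V} (hadj : ∀ j < d, G.Adj (v j) (v (j + 1)))
  (hinj : Set.InjOn v (Set.Iic d))
include hadj hinj

theorem succ_eq_or_eq_succ_of_isLeaf {j k : ℕ} (hj : j ≤ d) (hk : k ≤ d) (hl : IsLeaf G (v j))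
    (hkj : G.Adj (v k) (v j)) : k + 1 = j ∨ j + 1 = k := by
  rcases Nat.eq_zero_or_pos j with rfl | hj0
  · have hd : 0 < d := by
      by_contra! hd
      obtain rfl : k = 0 := by omega
      exact hkj.ne rfl
    have := hinj (Set.mem_Iic.mpr hd) hk (hl.eq_of_adj hkj (hadj 0 hd).symm)
    omega
  · have hadj' := hadj (j - 1) (by omega)
    rw [Nat.sub_add_cancel hj0] at hadj'
    have := hinj (Set.mem_Iic.mpr (by omega)) hk (hl.eq_of_adj hkj hadj')
    omega

theorem dist_isLeaf_of_le (hT : G.IsTree) (hl : IsLeaf G l) {j k : ℕ} (hjk : j ≤ k) (hk : k ≤ d)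
    (hkl : G.Adj (v k) l) (hjl : v j ≠ l) : G.dist (v j) l = k - j + 1 := by
  rw [hl.dist_eq_dist_add_one hT.connected hkl hjl, hT.dist_eq_sub_of_adj_of_injOn hadj hinj hjk hk]

theorem dist_isLeaf_of_ge (hT : G.IsTree) (hl : IsLeaf G l) {j k : ℕ} (hkj : k ≤ j) (hj : j ≤ d)
    (hkl : G.Adj (v k) l) (hjl : v j ≠ l) : G.dist (v j) l = j - k + 1 := by
  rw [hl.dist_eq_dist_add_one hT.connected hkl hjl, dist_comm,
    hT.dist_eq_sub_of_adj_of_injOn hadj hinj hkj hj]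

end Leaves

section Broadcasts

variable {G : SimpleGraph V} {f g : V → ℕ}

theorem Hears.mono {u : V} (h : Hears G f u) (hfg : f ≤ g) : Hears G g u :=
  let ⟨w, hw, hwu⟩ := h
  ⟨w, hw.trans (hfg w), hwu.trans (hfg w)⟩

theorem mem_PB_iff [DecidableEq V] {x u : V} :
    u ∈ PB G f x ↔ G.dist x u ≤ f x ∧ (2 ≤ f x → f x ≤ G.dist x u) ∧
      ∀ w ≠ x, 1 ≤ f w → f w < G.dist w u := by
  simp only [PB, Hears, Set.mem_ofPred_eq, not_exists, not_and, not_le]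
  refine and_congr_right fun _ => ⟨fun h => ⟨fun h2 => ?_, fun w hw => ?_⟩, ?_⟩
  · have := h x
    simp only [Function.update_self] at this
    omega
  · simpa [Function.update_of_ne hw] using h w
  · rintro ⟨h2, hw⟩ w
    by_cases hwx : w = x
    · subst hwx
      simp only [Function.update_self]
      omega
    · simpa [Function.update_of_ne hwx] using hw w hwx

variable [Fintype V]

theorem dist_le_ecc (x y : V) : G.dist x y ≤ ecc G x :=
  Finset.le_sup (f := fun y => G.dist x y) (mem_univ y)

theorem IsDomBroadcast.isMinDomBroadcast [DecidableEq V] (hf : IsDomBroadcast G f)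
    (hPB : ∀ x, 1 ≤ f x → (PB G f x).Nonempty) : IsMinDomBroadcast G f := by
  refine ⟨hf, fun f' hlt hf' => ?_⟩
  obtain ⟨hle, x, hx⟩ := Pi.lt_def.mp hlt
  obtain ⟨u, -, hu⟩ := hPB x (by omega)
  refine hu ((hf'.2 u).mono fun w => ?_)
  by_cases hwx : w = x
  · subst hwx
    simp only [Function.update_self]
    omega
  · simpa [Function.update_of_ne hwx] using hle w

theorem IsMinDomBroadcast.cost_le_upperBroadcastNum (hf : IsMinDomBroadcast G f) :
    cost f ≤ upperBroadcastNum G := by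
  refine le_csSup ⟨∑ x, ecc G x, ?_⟩ ⟨f, hf, rfl⟩
  rintro n ⟨g, hg, rfl⟩
  exact sum_le_sum fun x _ => hg.1.1 x

end Broadcasts

theorem exists_irredundant_subcover {α : Type*} (R : α → α → Prop) (U : Finset α)
    (hR : ∀ u ∈ U, R u u) :
    ∃ S ⊆ U, (∀ u ∈ U, ∃ s ∈ S, R s u) ∧ ∀ s ∈ S, ∃ u ∈ U, R s u ∧ ∀ t ∈ S, R t u → t = s := by
  classical
  obtain ⟨S, hSU, hcover, hmin⟩ := exists_minimal_le_of_wellFoundedLT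
    (fun S : Finset α => ∀ u ∈ U, ∃ s ∈ S, R s u) U fun u hu => ⟨u, hu, hR u hu⟩
  refine ⟨S, hSU, hcover, fun s hs => ?_⟩
  by_contra! hshared
  have hcover' : ∀ u ∈ U, ∃ t ∈ S.erase s, R t u := by
    intro u hu
    obtain ⟨t, ht, htu⟩ := hcover u hu
    by_cases hts : t = s
    · subst hts
      obtain ⟨t', ht', ht'u, ht's⟩ := hshared u hu htu
      exact ⟨t', mem_erase.mpr ⟨ht's, ht'⟩, ht'u⟩
    · exact ⟨t, mem_erase.mpr ⟨hts, ht⟩, htu⟩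
  exact notMem_erase s S (hmin hcover' (erase_subset s S) hs)

section TwoSources

variable [DecidableEq V] {G : SimpleGraph V} {a b : V} {ra rb : ℕ} {S : Finset V}

def twoSourceBroadcast (a b : V) (ra rb : ℕ) (S : Finset V) (x : V) : ℕ :=
  if x = a then ra else if x = b then rb else if x ∈ S then 1 else 0

theorem twoSourceBroadcast_cases (a b : V) (ra rb : ℕ) (S : Finset V) (x : V) :
    (x = a ∧ twoSourceBroadcast a b ra rb S x = ra) ∨
      (x = b ∧ twoSourceBroadcast a b ra rb S x = rb) ∨
      (x ∈ S ∧ twoSourceBroadcast a b ra rb S x = 1) ∨ twoSourceBroadcast a b ra rb S x = 0 := by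
  unfold twoSourceBroadcast
  split_ifs <;> simp_all

theorem twoSourceBroadcast_comm (hab : a ≠ b) :
    twoSourceBroadcast a b ra rb S = twoSourceBroadcast b a rb ra S := by
  ext x
  unfold twoSourceBroadcast
  split_ifs <;> simp_all

theorem twoSourceBroadcast_left : twoSourceBroadcast a b ra rb S a = ra := by
  simp [twoSourceBroadcast]

theorem twoSourceBroadcast_right (hab : a ≠ b) : twoSourceBroadcast a b ra rb S b = rb := by
  rw [twoSourceBroadcast_comm hab, twoSourceBroadcast_left]

theorem twoSourceBroadcast_of_far (hSfar : ∀ s ∈ S, ra < G.dist a s ∧ rb < G.dist b s) {s : V}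
    (hs : s ∈ S) : twoSourceBroadcast a b ra rb S s = 1 := by
  simp [twoSourceBroadcast, hs, (ne_of_lt_dist (hSfar s hs).1).symm,
    (ne_of_lt_dist (hSfar s hs).2).symm]

theorem isDomBroadcast_twoSourceBroadcast [Fintype V] (hc : G.Connected) (hab : a ≠ b)
    (hra : 0 < ra) (hrb : 0 < rb) {p q : V} (hap : G.dist a p = ra) (hbq : G.dist b q = rb)
    (hSfar : ∀ s ∈ S, ra < G.dist a s ∧ rb < G.dist b s)
    (hcover : ∀ u, ra < G.dist a u → rb < G.dist b u → ∃ s ∈ S, G.dist s u ≤ 1) :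
    IsDomBroadcast G (twoSourceBroadcast a b ra rb S) := by
  refine ⟨fun x => ?_, fun u => ?_⟩
  · rcases twoSourceBroadcast_cases a b ra rb S x with
      ⟨rfl, hx⟩ | ⟨rfl, hx⟩ | ⟨hxS, hx⟩ | hx <;> rw [hx]
    · exact hap ▸ dist_le_ecc x p
    · exact hbq ▸ dist_le_ecc x q
    · exact (hc.pos_dist_of_ne (ne_of_lt_dist (hSfar x hxS).1).symm).trans_le (dist_le_ecc x a)
    · exact Nat.zero_le _
  by_cases hua : G.dist a u ≤ ra
  · exact ⟨a, by rw [twoSourceBroadcast_left]; omega, by rwa [twoSourceBroadcast_left]⟩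
  by_cases hub : G.dist b u ≤ rb
  · exact ⟨b, by rw [twoSourceBroadcast_right hab]; omega, by rwa [twoSourceBroadcast_right hab]⟩
  obtain ⟨s, hs, hsu⟩ := hcover u (by omega) (by omega)
  have hfs := twoSourceBroadcast_of_far hSfar hs
  exact ⟨s, hfs.ge, hfs ▸ hsu⟩

theorem mem_PB_twoSourceBroadcast_left {p : V} (hap : G.dist a p = ra) (hbp : rb < G.dist b p)
    (hSp : ∀ s ∈ S, 1 < G.dist s p) : p ∈ PB G (twoSourceBroadcast a b ra rb S) a := by
  rw [mem_PB_iff, twoSourceBroadcast_left]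
  refine ⟨hap.le, fun _ => hap.ge, fun w hwa hw => ?_⟩
  rcases twoSourceBroadcast_cases a b ra rb S w with
    ⟨rfl, -⟩ | ⟨rfl, hw'⟩ | ⟨hwS, hw'⟩ | hw'
  · exact absurd rfl hwa
  all_goals rw [hw'] at hw ⊢
  · exact hbp
  · exact hSp w hwS
  · omega

theorem mem_PB_twoSourceBroadcast_of_mem (hSfar : ∀ s ∈ S, ra < G.dist a s ∧ rb < G.dist b s)
    {s u : V} (hs : s ∈ S) (hu : ra < G.dist a u ∧ rb < G.dist b u) (hsu : G.dist s u ≤ 1)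
    (hprivate : ∀ t ∈ S, G.dist t u ≤ 1 → t = s) :
    u ∈ PB G (twoSourceBroadcast a b ra rb S) s := by
  rw [mem_PB_iff, twoSourceBroadcast_of_far hSfar hs]
  refine ⟨hsu, by omega, fun w hws hw => ?_⟩
  rcases twoSourceBroadcast_cases a b ra rb S w with
    ⟨rfl, hw'⟩ | ⟨rfl, hw'⟩ | ⟨hwS, hw'⟩ | hw' <;> rw [hw'] at hw ⊢
  · exact hu.1
  · exact hu.2
  · by_contra! hwu
    exact hws (hprivate w hwS hwu)
  · omega

end TwoSources

theorem exists_isMinDomBroadcast_of_witnesses [Fintype V] [DecidableEq V]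
    {G : SimpleGraph V} (hc : G.Connected) {a b p q : V} {ra rb : ℕ} (hra : 0 < ra) (hrb : 0 < rb)
    (hap : G.dist a p = ra) (hbp : rb < G.dist b p) (hbq : G.dist b q = rb)
    (haq : ra < G.dist a q) (hp : ∀ s, G.dist s p ≤ 1 → G.dist a s ≤ ra ∨ G.dist b s ≤ rb)
    (hq : ∀ s, G.dist s q ≤ 1 → G.dist a s ≤ ra ∨ G.dist b s ≤ rb) :
    ∃ f, IsMinDomBroadcast G f ∧ ra + rb ≤ cost f := by
  have hab : a ≠ b := by
    rintro rfl
    omega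
  obtain ⟨S, hSU, hcover, hirredundant⟩ := exists_irredundant_subcover (fun s u => G.dist s u ≤ 1)
    (univ.filter fun u => ra < G.dist a u ∧ rb < G.dist b u) (by simp)
  have hSfar : ∀ s ∈ S, ra < G.dist a s ∧ rb < G.dist b s := fun s hs => (mem_filter.mp (hSU hs)).2
  have hSfar_of {x : V} (hx : ∀ s, G.dist s x ≤ 1 → G.dist a s ≤ ra ∨ G.dist b s ≤ rb) :
      ∀ s ∈ S, 1 < G.dist s x := fun s hs => by
    by_contra! h
    have := hx s h
    have := hSfar s hs
    omega
  have hdom := isDomBroadcast_twoSourceBroadcast hc hab hra hrb hap hbq hSfar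
    fun u hua hub => hcover u (by simp [hua, hub])
  refine ⟨_, hdom.isMinDomBroadcast fun x hx => ?_, ?_⟩
  · rcases twoSourceBroadcast_cases a b ra rb S x with ⟨rfl, -⟩ | ⟨rfl, -⟩ | ⟨hxS, -⟩ | hx0
    · exact ⟨p, mem_PB_twoSourceBroadcast_left hap hbp (hSfar_of hp)⟩
    · rw [twoSourceBroadcast_comm hab]
      exact ⟨q, mem_PB_twoSourceBroadcast_left hbq haq (hSfar_of hq)⟩
    · obtain ⟨u, hu, hxu, hprivate⟩ := hirredundant x hxS
      exact ⟨u, mem_PB_twoSourceBroadcast_of_mem hSfar hxS (mem_filter.mp hu).2 hxu hprivate⟩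
    · omega
  · calc ra + rb = ∑ x ∈ {a, b}, twoSourceBroadcast a b ra rb S x := by
          rw [sum_pair hab, twoSourceBroadcast_left, twoSourceBroadcast_right hab]
      _ ≤ cost (twoSourceBroadcast a b ra rb S) := sum_le_sum_of_subset (subset_univ _)

end

theorem stmt6_general {V : Type*} [Fintype V] [DecidableEq V] (G : SimpleGraph V)
    [DecidableRel G.Adj] (hT : G.IsTree) (d : ℕ) (v : ℕ → V)
    (hdiam : diam G = d)
    (hadj : ∀ i < d, G.Adj (v i) (v (i + 1)))
    (hinj : ∀ i ≤ d, ∀ j ≤ d, v i = v j → i = j)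
    (i : ℕ) (hi1 : 1 ≤ i) (hi2 : i ≤ d - 2)
    (l l' : V)
    (hl : IsLeaf G l) (hladj : G.Adj (v i) l) (hlne : l ≠ v 0)
    (hl' : IsLeaf G l') (hladj' : G.Adj (v (i + 1)) l') (hlne' : l' ≠ v d) :
    diam G < upperBroadcastNum G := by
  have hinj' : Set.InjOn v (Set.Iic d) := fun j hj k hk => hinj j hj k hk
  have hpath {j k : ℕ} (hjk : j ≤ k) (hkd : k ≤ d) : G.dist (v j) (v k) = k - j :=
    hT.dist_eq_sub_of_adj_of_injOn hadj hinj' hjk hkd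
  have hvdl : v d ≠ l := fun h => by
    have := succ_eq_or_eq_succ_of_isLeaf hadj hinj' le_rfl (by omega) (h ▸ hl) (h ▸ hladj)
    omega
  have hv0l' : v 0 ≠ l' := fun h => by
    have :=
      succ_eq_or_eq_succ_of_isLeaf hadj hinj' (Nat.zero_le d) (by omega) (h ▸ hl') (h ▸ hladj')
    omega
  have h0l : G.dist (v 0) l = i + 1 := by
    simpa using dist_isLeaf_of_le hadj hinj' hT hl (Nat.zero_le i) (by omega) hladj hlne.symm
  have hdl : G.dist (v d) l = d - i + 1 :=
    dist_isLeaf_of_ge hadj hinj' hT hl (by omega) le_rfl hladj hvdl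
  have h0l' : G.dist (v 0) l' = i + 2 := by
    simpa using dist_isLeaf_of_le hadj hinj' hT hl' (Nat.zero_le _) (by omega) hladj' hv0l'
  have hdl' : G.dist (v d) l' = d - i := by
    rw [dist_isLeaf_of_ge hadj hinj' hT hl' (by omega) le_rfl hladj' hlne'.symm]
    omega
  have hnear_l (s : V) (hs : G.dist s l ≤ 1) : G.dist (v 0) s ≤ i + 1 ∨ G.dist (v d) s ≤ d - i := by
    rcases hl.eq_or_eq_of_dist_le_one hT.connected hladj hs with rfl | rfl
    · omega
    · exact Or.inl (by simp [hpath (Nat.zero_le i) (by omega)])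
  have hnear_l' (s : V) (hs : G.dist s l' ≤ 1) :
      G.dist (v 0) s ≤ i + 1 ∨ G.dist (v d) s ≤ d - i := by
    rcases hl'.eq_or_eq_of_dist_le_one hT.connected hladj' hs with rfl | rfl
    · omega
    · exact Or.inr (by rw [SimpleGraph.dist_comm, hpath (by omega) le_rfl]; omega)
  obtain ⟨f, hf, hcost⟩ := exists_isMinDomBroadcast_of_witnesses hT.connected (by omega)
    (by omega) h0l (by omega) hdl' (by omega) hnear_l hnear_l'
  have := hf.cost_le_upperBroadcastNum
  omega

/-- consecutive internal stems on a diametrical path force `Γ_b(T) > diam(T)`. -/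
theorem stmt6 {V : Type*} [Fintype V] [DecidableEq V] (G : SimpleGraph V)
    [DecidableRel G.Adj] (hT : G.IsTree) (d : ℕ) (v : ℕ → V)
    (hdiam : diam G = d)
    (hadj : ∀ i < d, G.Adj (v i) (v (i + 1)))
    (hinj : ∀ i ≤ d, ∀ j ≤ d, v i = v j → i = j)
    (hd3 : 3 ≤ d) (i : ℕ) (hi1 : 1 ≤ i) (hi2 : i ≤ d - 2)
    (l l' : V)
    (hl : IsLeaf G l) (hladj : G.Adj (v i) l) (hlne : l ≠ v 0)
    (hl' : IsLeaf G l') (hladj' : G.Adj (v (i + 1)) l') (hlne' : l' ≠ v d) :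
    diam G < upperBroadcastNum G :=
  stmt6_general G hT d v hdiam hadj hinj i hi1 hi2 l l' hl hladj hlne hl' hladj' hlne'

end AJC
end

section
/- Let T be a caterpillar with diametrical path v₀,v₁,...,v_d. Suppose v_i and v_{i+2k} are strong stems for some i ≥ 1 and integer k ≥ 1 with i+2k ≤ d−1, and v_{i+2r} is a stem for each r ∈ {1,...,k−1}. Then Γ_b(T) > d. -/
namespace AJC

variable {V : Type*}

open SimpleGraph

section Dev

lemma tree_dist {V : Type*} {G : SimpleGraph V} (hT : G.IsTree) {u w : V} (p : G.Walk u w)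
    (hp : p.IsPath) : G.dist u w = p.length := by
  obtain ⟨q, hq, hql⟩ := hT.isConnected.exists_path_of_dist u w
  obtain ⟨r, -, hun⟩ := hT.existsUnique_path u w
  rw [← hql, hun q hq, hun p hp]

lemma uniq_nbr {V : Type*} [Fintype V] {G : SimpleGraph V} [DecidableRel G.Adj]
    {x s t : V} (hx : IsLeaf G x) (hs : G.Adj s x) (ht : G.Adj t x) : s = t := by
  have hcard : (G.neighborFinset x).card ≤ 1 := le_of_eq hx
  exact Finset.card_le_one.mp hcard s ((G.mem_neighborFinset x s).mpr hs.symm)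
    t ((G.mem_neighborFinset x t).mpr ht.symm)

lemma nd_def (a b : ℕ) : Nat.dist a b = a - b + (b - a) := rfl

/-- Bundle of all hypotheses of Statement 11. -/
structure Cat (V : Type*) [Fintype V] [DecidableEq V] (G : SimpleGraph V)
    [DecidableRel G.Adj] : Type _ where
  d : ℕ
  v : ℕ → V
  hT : G.IsTree
  hdiam : diam G = d
  hadj : ∀ j < d, G.Adj (v j) (v (j+1))
  hinj : ∀ a ≤ d, ∀ b ≤ d, v a = v b → a = b
  hcat : ∀ x : V, (∀ j ≤ d, v j ≠ x) → IsLeaf G x ∧ ∃ j ≤ d, G.Adj (v j) x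
  i : ℕ
  k : ℕ
  hi : 1 ≤ i
  hk : 1 ≤ k
  hik : i + 2*k ≤ d - 1
  hs1 : IsStrongStem G (v i)
  hs2 : IsStrongStem G (v (i + 2*k))
  hmid : ∀ r, 1 ≤ r → r ≤ k - 1 → IsStem G (v (i + 2*r))

namespace Cat

variable {V : Type*} [Fintype V] [DecidableEq V] {G : SimpleGraph V} [DecidableRel G.Adj]
  (S : Cat V G)
include S

/-- length of right gap -/
def m : ℕ := S.d - S.i - 2*S.k

lemma conn : G.Connected := SimpleGraph.IsTree.isConnected S.hT

lemma hd4 : 4 ≤ S.d := by have := S.hik; have := S.hi; have := S.hk; omega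
lemma hm1 : 1 ≤ S.m := by have := S.hik; have := S.hd4; unfold m; omega
lemma hd_eq : S.d = S.i + 2*S.k + S.m := by have := S.hik; have := S.hd4; unfold m; omega

def Off (x : V) : Prop := ∀ j ≤ S.d, S.v j ≠ x

lemma off_leaf {x : V} (h : S.Off x) : IsLeaf G x := (S.hcat x h).1

lemma exists_seg : ∀ (n a : ℕ), a + n ≤ S.d →
    ∃ p : G.Walk (S.v a) (S.v (a+n)), p.IsPath ∧ p.length = n ∧
      ∀ x ∈ p.support, ∃ j, a ≤ j ∧ j ≤ a + n ∧ S.v j = x := by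
  intro n
  induction n with
  | zero =>
    intro a ha
    exact ⟨SimpleGraph.Walk.nil, by simp, by simp, by
      intro x hx; simp only [SimpleGraph.Walk.support_nil, List.mem_singleton] at hx
      exact ⟨a, le_refl _, le_refl _, hx.symm⟩⟩
  | succ n ih =>
    intro a ha
    obtain ⟨p, hp, hl, hsupp⟩ := ih (a+1) (by omega)
    have hadj0 : G.Adj (S.v a) (S.v (a+1)) := S.hadj a (by omega)
    have hcast : a + 1 + n = a + (n+1) := by omega
    refine ⟨(SimpleGraph.Walk.cons hadj0 p).copy rfl (by rw [hcast]), ?_, ?_, ?_⟩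
    · rw [SimpleGraph.Walk.isPath_copy, SimpleGraph.Walk.cons_isPath_iff]
      refine ⟨hp, fun hmem => ?_⟩
      obtain ⟨j, hj1, hj2, hj3⟩ := hsupp _ hmem
      have := S.hinj j (by omega) a (by omega) hj3
      omega
    · rw [SimpleGraph.Walk.length_copy, SimpleGraph.Walk.length_cons, hl]
    · intro x hx
      rw [SimpleGraph.Walk.support_copy, SimpleGraph.Walk.support_cons] at hx
      rcases List.mem_cons.mp hx with h | h
      · exact ⟨a, le_refl _, by omega, h.symm⟩
      · obtain ⟨j, hj1, hj2, hj3⟩ := hsupp _ h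
        exact ⟨j, by omega, by omega, hj3⟩

lemma dist_v {a b : ℕ} (ha : a ≤ S.d) (hb : b ≤ S.d) :
    G.dist (S.v a) (S.v b) = Nat.dist a b := by
  rcases le_total a b with h | h
  · obtain ⟨p, hp, hl, -⟩ := S.exists_seg (b - a) a (by omega)
    have ht := tree_dist S.hT p hp
    rw [hl] at ht
    rw [show a + (b - a) = b by omega] at ht
    rw [ht, nd_def]; omega
  · obtain ⟨p, hp, hl, -⟩ := S.exists_seg (a - b) b (by omega)
    have ht := tree_dist S.hT p hp
    rw [hl] at ht
    rw [show b + (a - b) = a by omega] at ht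
    rw [SimpleGraph.dist_comm, ht, nd_def]; omega

lemma dist_le_d (x y : V) : G.dist x y ≤ S.d := by
  have h1 : G.dist x y ≤ ecc G x := Finset.le_sup (Finset.mem_univ y)
  have h2 : ecc G x ≤ diam G := Finset.le_sup (Finset.mem_univ x)
  rw [S.hdiam] at h2; omega


lemma adj_vv {a b : ℕ} (ha : a ≤ S.d) (hb : b ≤ S.d) (h : G.Adj (S.v a) (S.v b)) :
    Nat.dist a b = 1 := by
  have h1 : G.dist (S.v a) (S.v b) ≤ 1 :=
    SimpleGraph.dist_le (SimpleGraph.Walk.cons h SimpleGraph.Walk.nil)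
  rw [S.dist_v ha hb] at h1
  have h2 : a ≠ b := by
    intro e; subst e; exact G.irrefl h
  have := Nat.dist_pos_of_ne h2
  omega

lemma dist_leaf {x s z : V} (hx : IsLeaf G x) (hadj : G.Adj s x) (hne : z ≠ x) :
    G.dist x z = G.dist s z + 1 := by
  have hle : G.dist x z ≤ G.dist s z + 1 := by
    obtain ⟨q, -, hql⟩ := S.conn.exists_path_of_dist s z
    have := SimpleGraph.dist_le (SimpleGraph.Walk.cons hadj.symm q)
    rw [SimpleGraph.Walk.length_cons, hql] at this
    omega
  have hge : G.dist s z + 1 ≤ G.dist x z := by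
    obtain ⟨p, hp, hpl⟩ := S.conn.exists_path_of_dist x z
    cases p with
    | nil => exact absurd rfl hne
    | @cons _ w _ h q =>
      have hw : w = s := uniq_nbr hx h.symm hadj
      subst hw
      have := SimpleGraph.dist_le q
      rw [SimpleGraph.Walk.length_cons] at hpl
      omega
  omega

lemma stem_uniq {x : V} (hx : IsLeaf G x) {a b : ℕ} (ha : a ≤ S.d) (hb : b ≤ S.d)
    (h1 : G.Adj (S.v a) x) (h2 : G.Adj (S.v b) x) : a = b :=
  S.hinj a ha b hb (uniq_nbr hx h1 h2)

lemma dist_off_v {x : V} {j b : ℕ} (hoff : S.Off x) (hj : j ≤ S.d) (hb : b ≤ S.d)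
    (ha : G.Adj (S.v j) x) : G.dist x (S.v b) = Nat.dist j b + 1 := by
  rw [S.dist_leaf (S.off_leaf hoff) ha (hoff b hb), S.dist_v hj hb]

lemma dist_off_off {x y : V} {jx jy : ℕ} (hx : S.Off x) (hy : S.Off y) (hne : x ≠ y)
    (hjx : jx ≤ S.d) (hjy : jy ≤ S.d) (hax : G.Adj (S.v jx) x) (hay : G.Adj (S.v jy) y) :
    G.dist x y = Nat.dist jx jy + 2 := by
  rw [S.dist_leaf (S.off_leaf hx) hax hne.symm, SimpleGraph.dist_comm,
    S.dist_off_v hy hjy hjx hay, Nat.dist_comm]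

lemma no_off_adj_0 {x : V} (hoff : S.Off x) : ¬ G.Adj (S.v 0) x := by
  intro h
  have h1 := S.dist_off_v hoff (by omega) (le_refl S.d) h
  have h2 := S.dist_le_d x (S.v S.d)
  rw [nd_def] at h1
  have := S.hd4
  omega

lemma no_off_adj_d {x : V} (hoff : S.Off x) : ¬ G.Adj (S.v S.d) x := by
  intro h
  have h1 := S.dist_off_v hoff (le_refl S.d) (by omega : 0 ≤ S.d) h
  have h2 := S.dist_le_d x (S.v 0)
  rw [nd_def] at h1
  have := S.hd4
  omega

lemma off_of_not_on {x : V} (h : ¬ ∃ j ≤ S.d, S.v j = x) : S.Off x := by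
  intro j hj he; exact h ⟨j, hj, he⟩

lemma isLeaf_v0 : IsLeaf G (S.v 0) := by
  have hset : G.neighborFinset (S.v 0) = {S.v 1} := by
    ext y
    rw [SimpleGraph.mem_neighborFinset, Finset.mem_singleton]
    constructor
    · intro h
      by_cases hon : ∃ j ≤ S.d, S.v j = y
      · obtain ⟨b, hb, he⟩ := hon
        subst he
        have := S.adj_vv (by omega : 0 ≤ S.d) hb h
        rw [nd_def] at this
        have hb1 : b = 1 := by omega
        rw [hb1]
      · exact absurd h (S.no_off_adj_0 (S.off_of_not_on hon))
    · intro h; subst h; exact S.hadj 0 (by have := S.hd4; omega)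
  unfold IsLeaf
  rw [SimpleGraph.degree, hset, Finset.card_singleton]

lemma isLeaf_vd : IsLeaf G (S.v S.d) := by
  have hd := S.hd4
  have hset : G.neighborFinset (S.v S.d) = {S.v (S.d - 1)} := by
    ext y
    rw [SimpleGraph.mem_neighborFinset, Finset.mem_singleton]
    constructor
    · intro h
      by_cases hon : ∃ j ≤ S.d, S.v j = y
      · obtain ⟨b, hb, he⟩ := hon
        subst he
        have := S.adj_vv (le_refl S.d) hb h
        rw [nd_def] at this
        have hb1 : b = S.d - 1 := by omega
        rw [hb1]
      · exact absurd h (S.no_off_adj_d (S.off_of_not_on hon))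
    · intro h; subst h
      have h2 := S.hadj (S.d - 1) (by omega)
      rw [show S.d - 1 + 1 = S.d by omega] at h2
      exact h2.symm
  unfold IsLeaf
  rw [SimpleGraph.degree, hset, Finset.card_singleton]

lemma not_leaf_mid {j : ℕ} (h1 : 1 ≤ j) (h2 : j ≤ S.d - 1) : ¬ IsLeaf G (S.v j) := by
  have hd := S.hd4
  intro hleaf
  have hne : S.v (j-1) ≠ S.v (j+1) := by
    intro he
    have := S.hinj (j-1) (by omega) (j+1) (by omega) he
    omega
  have hsub : ({S.v (j-1), S.v (j+1)} : Finset V) ⊆ G.neighborFinset (S.v j) := by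
    intro y hy
    rw [Finset.mem_insert, Finset.mem_singleton] at hy
    rw [SimpleGraph.mem_neighborFinset]
    rcases hy with h | h <;> subst h
    · have h3 := S.hadj (j-1) (by omega)
      rw [show j - 1 + 1 = j by omega] at h3
      exact h3.symm
    · exact S.hadj j (by omega)
  have hcard := Finset.card_le_card hsub
  rw [Finset.card_insert_of_notMem (by simpa using hne), Finset.card_singleton] at hcard
  unfold IsLeaf at hleaf
  rw [SimpleGraph.degree] at hleaf
  omega


/-- leaves hanging at window stems -/
def PAp (x : V) : Prop := IsLeaf G x ∧ ∃ r ≤ S.k, G.Adj (S.v (S.i + 2*r)) x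

/-- odd-offset window path vertices -/
def POp (x : V) : Prop := ∃ r < S.k, x = S.v (S.i + 2*r + 1)

def sideL : Prop := ∃ x, S.Off x ∧ G.Adj (S.v (S.i - 1)) x
def sideR : Prop := ∃ x, S.Off x ∧ G.Adj (S.v (S.i + 2*S.k + 1)) x

open scoped Classical in
noncomputable def LL : ℕ := if 2 ≤ S.i then (if S.sideL then S.i else S.i - 1) else 0

open scoped Classical in
noncomputable def RR : ℕ := if 2 ≤ S.m then (if S.sideR then S.m else S.m - 1) else 0

open scoped Classical in
noncomputable def fB : V → ℕ := fun x =>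
  (if x = S.v 0 then S.LL else 0) + (if x = S.v S.d then S.RR else 0) +
  (if S.POp x then 1 else 0) + (if S.PAp x then 1 else 0)

lemma LL_le : S.LL ≤ S.i := by unfold LL; split_ifs <;> omega

lemma RR_le : S.RR ≤ S.m := by unfold RR; split_ifs <;> omega

lemma vne {a b : ℕ} (ha : a ≤ S.d) (hb : b ≤ S.d) (hnab : a ≠ b) : S.v a ≠ S.v b :=
  fun he => hnab (S.hinj a ha b hb he)

lemma PO_bounds {x : V} (h : S.POp x) : ∃ q, x = S.v q ∧ S.i + 1 ≤ q ∧ q ≤ S.i + 2*S.k - 1 ∧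
    q ≤ S.d - 2 ∧ 2 ≤ q ∧ (q - S.i) % 2 = 1 := by
  obtain ⟨r, hr, he⟩ := h
  have := S.hik; have := S.hd4; have := S.hi; have := S.hm1
  exact ⟨S.i + 2*r + 1, he, by omega, by omega, by omega, by omega, by omega⟩

lemma PO_not_v0 : ¬ S.POp (S.v 0) := by
  intro h
  obtain ⟨q, he, h1, h2, h3, h4, -⟩ := S.PO_bounds h
  have := S.hinj 0 (by omega) q (by omega) he
  omega

lemma PO_not_vd : ¬ S.POp (S.v S.d) := by
  intro h
  obtain ⟨q, he, h1, h2, h3, h4, -⟩ := S.PO_bounds h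
  have hd := S.hd4
  have := S.hinj S.d (le_refl _) q (by omega) he
  omega

lemma PO_off_false {x : V} (hoff : S.Off x) (h : S.POp x) : False := by
  obtain ⟨q, he, h1, h2, h3, -, -⟩ := S.PO_bounds h
  exact hoff q (by omega) he.symm

lemma PA_v_cases {j : ℕ} (hj : j ≤ S.d) (h : S.PAp (S.v j)) :
    (j = 0 ∧ S.i = 1) ∨ (j = S.d ∧ S.m = 1) := by
  obtain ⟨hleaf, r, hr, hadj⟩ := h
  have := S.hik; have := S.hd4; have := S.hi; have := S.hm1
  have hir : S.i + 2*r ≤ S.d - 1 := by omega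
  have hvv := S.adj_vv (by omega) hj hadj
  rw [nd_def] at hvv
  have hj0 : j = 0 ∨ (1 ≤ j ∧ j ≤ S.d - 1) ∨ j = S.d := by omega
  rcases hj0 with h0 | hmid | hd
  · left; constructor
    · exact h0
    · subst h0; omega
  · exact absurd hleaf (S.not_leaf_mid hmid.1 hmid.2)
  · right; refine ⟨hd, ?_⟩
    subst hd
    unfold m
    omega

lemma PA_v0_iff : S.PAp (S.v 0) ↔ S.i = 1 := by
  constructor
  · intro h
    rcases S.PA_v_cases (by omega) h with h | h
    · exact h.2
    · have := S.hd4; have := S.hm1; have heq := h.1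
      exact absurd heq (by
        intro he
        have := S.hinj 0 (by omega) S.d (le_refl _) (by rw [he])
        omega)
  · intro h
    refine ⟨S.isLeaf_v0, 0, by omega, ?_⟩
    have h2 := S.hadj 0 (by have := S.hd4; omega)
    rw [show S.i + 2*0 = 1 by omega]
    exact h2.symm

lemma PA_vd_iff : S.PAp (S.v S.d) ↔ S.m = 1 := by
  have hd := S.hd4; have := S.hik; have := S.hi; have := S.hm1
  constructor
  · intro h
    rcases S.PA_v_cases (le_refl _) h with h | h
    · exact absurd h.1 (by
        intro he
        have := S.hinj S.d (le_refl _) 0 (by omega) (by rw [he])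
        omega)
    · exact h.2
  · intro h
    have hik2 : S.i + 2*S.k = S.d - 1 := by unfold m at h; omega
    refine ⟨S.isLeaf_vd, S.k, le_refl _, ?_⟩
    have h2 := S.hadj (S.d - 1) (by omega)
    rw [show S.d - 1 + 1 = S.d by omega] at h2
    rw [hik2]
    exact h2

lemma v0_ne_vd : S.v 0 ≠ S.v S.d := S.vne (by omega) (le_refl _) (by have := S.hd4; omega)

lemma fB_v0 : S.fB (S.v 0) = if S.i = 1 then 1 else S.LL := by
  have hd := S.hd4
  unfold fB
  rw [if_pos rfl, if_neg S.v0_ne_vd, if_neg S.PO_not_v0]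
  by_cases h1 : S.i = 1
  · rw [if_pos (S.PA_v0_iff.mpr h1), if_pos h1]
    have : S.LL = 0 := by unfold LL; rw [if_neg (by omega)]
    omega
  · rw [if_neg (fun hpa => h1 (S.PA_v0_iff.mp hpa)), if_neg h1]; omega

lemma fB_vd : S.fB (S.v S.d) = if S.m = 1 then 1 else S.RR := by
  unfold fB
  rw [if_neg (Ne.symm S.v0_ne_vd), if_pos rfl, if_neg S.PO_not_vd]
  by_cases h1 : S.m = 1
  · rw [if_pos (S.PA_vd_iff.mpr h1), if_pos h1]
    have : S.RR = 0 := by unfold RR; rw [if_neg (by omega)]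
    omega
  · rw [if_neg (fun hpa => h1 (S.PA_vd_iff.mp hpa)), if_neg h1]; omega

lemma fB_PO {x : V} (h : S.POp x) : S.fB x = 1 := by
  obtain ⟨q, he, h1, h2, h3, h4, -⟩ := S.PO_bounds h
  have hd := S.hd4
  unfold fB
  subst he
  rw [if_neg (S.vne (by omega) (by omega) (by omega)),
    if_neg (S.vne (by omega) (le_refl _) (by omega)), if_pos h,
    if_neg (fun hpa => by
      rcases S.PA_v_cases (by omega) hpa with hc | hc <;> omega)]

lemma fB_PA_off {x : V} (hoff : S.Off x) (h : S.PAp x) : S.fB x = 1 := by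
  have hd := S.hd4
  unfold fB
  rw [if_neg (fun he => hoff 0 (by omega) he.symm),
    if_neg (fun he => hoff S.d (le_refl _) he.symm),
    if_neg (fun hpo => S.PO_off_false hoff hpo), if_pos h]

lemma fB_supp {w : V} (h : 1 ≤ S.fB w) :
    w = S.v 0 ∨ w = S.v S.d ∨ S.POp w ∨ (S.PAp w ∧ S.Off w) := by
  by_cases hpo : S.POp w
  · tauto
  by_cases h0 : w = S.v 0
  · tauto
  by_cases hd0 : w = S.v S.d
  · tauto
  by_cases hpa : S.PAp w
  · right; right; right
    refine ⟨hpa, ?_⟩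
    by_cases hon : ∃ j ≤ S.d, S.v j = w
    · obtain ⟨j, hj, he⟩ := hon
      subst he
      rcases S.PA_v_cases hj hpa with hc | hc
      · exact absurd (by rw [hc.1]) h0
      · exact absurd (by rw [hc.1]) hd0
    · exact S.off_of_not_on hon
  · exfalso
    unfold fB at h
    rw [if_neg h0, if_neg hd0, if_neg hpo, if_neg hpa] at h
    omega


lemma dist_adj {a b : V} (h : G.Adj a b) : G.dist a b = 1 := by
  have h1 : G.dist a b ≤ 1 := SimpleGraph.dist_le (SimpleGraph.Walk.cons h SimpleGraph.Walk.nil)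
  have h2 : G.dist a b ≠ 0 := by
    intro h0
    rw [S.conn.dist_eq_zero_iff] at h0
    exact h.ne h0
  omega

lemma fB_PA_pos {x : V} (h : S.PAp x) : 1 ≤ S.fB x := by
  unfold fB; rw [if_pos h]; omega

lemma fB_PO_pos {x : V} (h : S.POp x) : 1 ≤ S.fB x := by
  unfold fB; rw [if_pos h]; omega

lemma LL_sideL (h2 : 2 ≤ S.i) (h : S.sideL) : S.LL = S.i := by
  unfold LL; rw [if_pos h2, if_pos h]

lemma LL_noside (h2 : 2 ≤ S.i) (h : ¬ S.sideL) : S.LL = S.i - 1 := by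
  unfold LL; rw [if_pos h2, if_neg h]

lemma RR_sideR (h2 : 2 ≤ S.m) (h : S.sideR) : S.RR = S.m := by
  unfold RR; rw [if_pos h2, if_pos h]

lemma RR_noside (h2 : 2 ≤ S.m) (h : ¬ S.sideR) : S.RR = S.m - 1 := by
  unfold RR; rw [if_pos h2, if_neg h]

lemma fB_v0' (h2 : 2 ≤ S.i) : S.fB (S.v 0) = S.LL := by
  rw [S.fB_v0, if_neg (by omega)]

lemma fB_vd' (h2 : 2 ≤ S.m) : S.fB (S.v S.d) = S.RR := by
  rw [S.fB_vd, if_neg (by omega)]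

lemma mkPA (r : ℕ) {x : V} (hl : IsLeaf G x) (hr : r ≤ S.k)
    (ha : G.Adj (S.v (S.i + 2*r)) x) : S.PAp x := ⟨hl, r, hr, ha⟩

lemma mkPO {t : ℕ} (ht : t < S.k) : S.POp (S.v (S.i + 2*t + 1)) := ⟨t, ht, rfl⟩

lemma stem_leaf : ∀ r ≤ S.k, ∃ l, IsLeaf G l ∧ G.Adj (S.v (S.i + 2*r)) l := by
  intro r hr
  rcases Nat.eq_zero_or_pos r with h0 | hpos
  · subst h0
    obtain ⟨l1, l2, hne, hl1, hl2, ha1, ha2⟩ := S.hs1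
    exact ⟨l1, hl1, by rw [show S.i + 2*0 = S.i by omega]; exact ha1⟩
  rcases eq_or_lt_of_le hr with hk | hlt
  · subst hk
    obtain ⟨l1, l2, hne, hl1, hl2, ha1, ha2⟩ := S.hs2
    exact ⟨l1, hl1, ha1⟩
  · obtain ⟨l, hl, ha⟩ := S.hmid r hpos (by omega)
    exact ⟨l, hl, ha⟩

/-- Every vertex hears the broadcast `fB`. -/
lemma fB_dom (u : V) : Hears G S.fB u := by
  have hd := S.hd4; have hik := S.hik; have hi := S.hi; have hk := S.hk; have hm := S.hm1
  have hdm : S.d = S.i + 2*S.k + S.m := S.hd_eq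
  by_cases hon : ∃ j ≤ S.d, S.v j = u
  · obtain ⟨j, hj, he⟩ := hon
    subst he
    rcases lt_trichotomy j S.i with hlt | heq | hgt
    · -- left gap
      rcases Nat.lt_or_ge S.i 2 with hi1 | hi2
      · -- i = 1, j = 0
        have hj0 : j = 0 := by omega
        subst hj0
        refine ⟨S.v 0, ?_, ?_⟩
        · rw [S.fB_v0, if_pos (by omega)]
        · rw [SimpleGraph.dist_self]; omega
      · refine ⟨S.v 0, ?_, ?_⟩
        · rw [S.fB_v0' hi2]
          have := S.LL_noside hi2; have := S.LL_sideL hi2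
          by_cases hs : S.sideL
          · rw [S.LL_sideL hi2 hs]; omega
          · rw [S.LL_noside hi2 hs]; omega
        · rw [S.fB_v0' hi2, S.dist_v (by omega) hj, nd_def]
          by_cases hs : S.sideL
          · rw [S.LL_sideL hi2 hs]; omega
          · rw [S.LL_noside hi2 hs]; omega
    · subst heq
      obtain ⟨l, hl, ha⟩ := S.stem_leaf 0 (by omega)
      rw [show S.i + 2*0 = S.i by omega] at ha
      exact ⟨l, S.fB_PA_pos (S.mkPA 0 hl (by omega) (by rw [show S.i + 2*0 = S.i by omega]; exact ha)),
        by
          rw [S.dist_adj ha.symm]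
          exact S.fB_PA_pos (S.mkPA 0 hl (by omega) (by rw [show S.i + 2*0 = S.i by omega]; exact ha))⟩
    · rcases Nat.lt_or_ge (S.i + 2*S.k) j with hR | hwin
      · -- right gap
        rcases Nat.lt_or_ge S.m 2 with hm1 | hm2
        · have hjd : j = S.d := by omega
          subst hjd
          exact ⟨S.v S.d, by rw [S.fB_vd, if_pos (by omega)], by rw [SimpleGraph.dist_self]; omega⟩
        · refine ⟨S.v S.d, ?_, ?_⟩
          · rw [S.fB_vd' hm2]
            by_cases hs : S.sideR
            · rw [S.RR_sideR hm2 hs]; omega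
            · rw [S.RR_noside hm2 hs]; omega
          · rw [S.fB_vd' hm2, S.dist_v (le_refl _) hj, nd_def]
            by_cases hs : S.sideR
            · rw [S.RR_sideR hm2 hs]; omega
            · rw [S.RR_noside hm2 hs]; omega
      · -- window
        have hsplit : (∃ t ≤ S.k, j = S.i + 2*t) ∨ (∃ t < S.k, j = S.i + 2*t + 1) := by
          rcases Nat.even_or_odd (j - S.i) with ⟨t, ht⟩ | ⟨t, ht⟩
          · exact Or.inl ⟨t, by omega, by omega⟩
          · exact Or.inr ⟨t, by omega, by omega⟩
        rcases hsplit with ⟨t, ht, hje⟩ | ⟨t, ht, hje⟩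
        · subst hje
          obtain ⟨l, hl, ha⟩ := S.stem_leaf t ht
          exact ⟨l, S.fB_PA_pos (S.mkPA t hl ht ha),
            by rw [S.dist_adj ha.symm]; exact S.fB_PA_pos (S.mkPA t hl ht ha)⟩
        · subst hje
          exact ⟨S.v (S.i + 2*t + 1), S.fB_PO_pos (S.mkPO ht),
            by rw [SimpleGraph.dist_self]; omega⟩
  · -- off path
    have hoff : S.Off u := S.off_of_not_on hon
    obtain ⟨hl, j, hj, ha⟩ := S.hcat u hoff
    rcases lt_trichotomy j S.i with hlt | heq | hgt
    · rcases Nat.lt_or_ge S.i 2 with hi1 | hi2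
      · have hj0 : j = 0 := by omega
        subst hj0
        exact absurd ha (S.no_off_adj_0 hoff)
      · refine ⟨S.v 0, ?_, ?_⟩
        · rw [S.fB_v0' hi2]
          by_cases hs : S.sideL
          · rw [S.LL_sideL hi2 hs]; omega
          · rw [S.LL_noside hi2 hs]; omega
        · rw [S.fB_v0' hi2, SimpleGraph.dist_comm, S.dist_off_v hoff hj (by omega) ha, nd_def]
          by_cases hs : S.sideL
          · rw [S.LL_sideL hi2 hs]; omega
          · rw [S.LL_noside hi2 hs]
            have hne : j ≠ S.i - 1 := fun he => hs ⟨u, hoff, by rw [← he]; exact ha⟩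
            omega
    · subst heq
      exact ⟨u, S.fB_PA_pos (S.mkPA 0 hl (by omega) (by rw [show S.i + 2*0 = S.i by omega]; exact ha)),
        by rw [SimpleGraph.dist_self]; omega⟩
    · rcases Nat.lt_or_ge (S.i + 2*S.k) j with hR | hwin
      · rcases Nat.lt_or_ge S.m 2 with hm1 | hm2
        · have hjd : j = S.d := by omega
          subst hjd
          exact absurd ha (S.no_off_adj_d hoff)
        · refine ⟨S.v S.d, ?_, ?_⟩
          · rw [S.fB_vd' hm2]
            by_cases hs : S.sideR
            · rw [S.RR_sideR hm2 hs]; omega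
            · rw [S.RR_noside hm2 hs]; omega
          · rw [S.fB_vd' hm2, SimpleGraph.dist_comm, S.dist_off_v hoff hj (le_refl _) ha, nd_def]
            by_cases hs : S.sideR
            · rw [S.RR_sideR hm2 hs]; omega
            · rw [S.RR_noside hm2 hs]
              have hne : j ≠ S.i + 2*S.k + 1 := fun he => hs ⟨u, hoff, by rw [← he]; exact ha⟩
              omega
      · have hsplit : (∃ t ≤ S.k, j = S.i + 2*t) ∨ (∃ t < S.k, j = S.i + 2*t + 1) := by
          rcases Nat.even_or_odd (j - S.i) with ⟨t, ht⟩ | ⟨t, ht⟩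
          · exact Or.inl ⟨t, by omega, by omega⟩
          · exact Or.inr ⟨t, by omega, by omega⟩
        rcases hsplit with ⟨t, ht, hje⟩ | ⟨t, ht, hje⟩
        · subst hje
          exact ⟨u, S.fB_PA_pos (S.mkPA t hl ht ha), by rw [SimpleGraph.dist_self]; omega⟩
        · subst hje
          exact ⟨S.v (S.i + 2*t + 1), S.fB_PO_pos (S.mkPO ht), by rw [S.dist_adj ha]; exact S.fB_PO_pos (S.mkPO ht)⟩


lemma fB_v0_le : S.fB (S.v 0) ≤ S.i := by
  rw [S.fB_v0]
  have := S.LL_le; have := S.hi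
  split_ifs <;> omega

lemma fB_vd_le : S.fB (S.v S.d) ≤ S.m := by
  rw [S.fB_vd]
  have := S.RR_le; have := S.hm1
  split_ifs <;> omega

lemma fB_off_zero {x : V} (hoff : S.Off x) (hpa : ¬ S.PAp x) : S.fB x = 0 := by
  have hd := S.hd4
  unfold fB
  rw [if_neg (fun he => hoff 0 (by omega) he.symm),
    if_neg (fun he => hoff S.d (le_refl _) he.symm),
    if_neg (fun hpo => S.PO_off_false hoff hpo), if_neg hpa]

/-- A side leaf (hanging outside the window) has zero broadcast value. -/
lemma side_off_zero {x : V} (hoff : S.Off x) {b : ℕ} (hb : b ≤ S.d)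
    (hadj : G.Adj (S.v b) x) (hout : b < S.i ∨ S.i + 2*S.k < b) : S.fB x = 0 := by
  refine S.fB_off_zero hoff (fun hpa => ?_)
  obtain ⟨hleaf, r, hr, ha2⟩ := hpa
  have := S.hik; have := S.hd4
  have := S.stem_uniq hleaf (by omega) hb ha2 hadj
  omega

/-- Distances from support vertices to an on-path point. -/
lemma supp_dist_on {w : V} (hw : 1 ≤ S.fB w) {b : ℕ} (hb : b ≤ S.d) :
    (w = S.v 0 ∧ S.fB w ≤ S.i ∧ G.dist w (S.v b) = b) ∨
    (w = S.v S.d ∧ S.fB w ≤ S.m ∧ G.dist w (S.v b) = S.d - b) ∨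
    (∃ q, w = S.v q ∧ S.i + 1 ≤ q ∧ q ≤ S.i + 2*S.k - 1 ∧ (q - S.i) % 2 = 1 ∧
      S.fB w = 1 ∧ G.dist w (S.v b) = Nat.dist q b) ∨
    (∃ r, r ≤ S.k ∧ S.fB w = 1 ∧ G.dist w (S.v b) = Nat.dist (S.i + 2*r) b + 1) := by
  have hd := S.hd4
  rcases S.fB_supp hw with h0 | hdd | hpo | ⟨hpa, hoff⟩
  · left
    refine ⟨h0, by rw [h0]; exact S.fB_v0_le, ?_⟩
    rw [h0, S.dist_v (by omega) hb, nd_def]; omega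
  · right; left
    refine ⟨hdd, by rw [hdd]; exact S.fB_vd_le, ?_⟩
    rw [hdd, S.dist_v (le_refl _) hb, nd_def]; omega
  · right; right; left
    obtain ⟨q, he, h1, h2, h3, h4, h5⟩ := S.PO_bounds hpo
    exact ⟨q, he, h1, h2, h5, S.fB_PO hpo, by rw [he, S.dist_v (by omega) hb]⟩
  · right; right; right
    obtain ⟨r, hr, hadj⟩ := hpa.2
    have hpd : S.i + 2*r ≤ S.d := by have := S.hik; omega
    exact ⟨r, hr, S.fB_PA_off hoff hpa, S.dist_off_v hoff hpd hb hadj⟩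

/-- Distances from support vertices to an off-path point. -/
lemma supp_dist_off {u : V} (hu : S.Off u) {b : ℕ} (hb : b ≤ S.d) (hadj : G.Adj (S.v b) u)
    {w : V} (hw : 1 ≤ S.fB w) (hwu : w ≠ u) :
    (w = S.v 0 ∧ S.fB w ≤ S.i ∧ G.dist w u = b + 1) ∨
    (w = S.v S.d ∧ S.fB w ≤ S.m ∧ G.dist w u = (S.d - b) + 1) ∨
    (∃ q, w = S.v q ∧ S.i + 1 ≤ q ∧ q ≤ S.i + 2*S.k - 1 ∧ (q - S.i) % 2 = 1 ∧
      S.fB w = 1 ∧ G.dist w u = Nat.dist q b + 1) ∨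
    (∃ r, r ≤ S.k ∧ S.fB w = 1 ∧ G.dist w u = Nat.dist (S.i + 2*r) b + 2) := by
  have hd := S.hd4
  rcases S.fB_supp hw with h0 | hdd | hpo | ⟨hpa, hoff⟩
  · left
    refine ⟨h0, by rw [h0]; exact S.fB_v0_le, ?_⟩
    rw [h0, SimpleGraph.dist_comm, S.dist_off_v hu hb (by omega) hadj, nd_def]; omega
  · right; left
    refine ⟨hdd, by rw [hdd]; exact S.fB_vd_le, ?_⟩
    rw [hdd, SimpleGraph.dist_comm, S.dist_off_v hu hb (le_refl _) hadj, nd_def]; omega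
  · right; right; left
    obtain ⟨q, he, h1, h2, h3, h4, h5⟩ := S.PO_bounds hpo
    refine ⟨q, he, h1, h2, h5, S.fB_PO hpo, ?_⟩
    rw [he, SimpleGraph.dist_comm, S.dist_off_v hu hb (by omega) hadj, Nat.dist_comm]
  · right; right; right
    obtain ⟨r, hr, hadjw⟩ := hpa.2
    have hpd : S.i + 2*r ≤ S.d := by have := S.hik; omega
    exact ⟨r, hr, S.fB_PA_off hoff hpa,
      S.dist_off_off hoff hu hwu hpd hb hadjw hadj⟩

/-- Private vertex for every support vertex of `fB`. -/
lemma fB_private {s : V} (hs : 1 ≤ S.fB s) :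
    ∃ u : V, (S.fB s ≤ 1 ∨ S.fB s ≤ G.dist s u) ∧
      ∀ w, w ≠ s → 1 ≤ S.fB w → S.fB w < G.dist w u := by
  have hd := S.hd4; have hik := S.hik; have hi := S.hi; have hk := S.hk; have hm := S.hm1
  have hdm : S.d = S.i + 2*S.k + S.m := S.hd_eq
  rcases S.fB_supp hs with h0 | hdd | hpo | ⟨hpa, hoff⟩
  · -- s = v 0
    subst h0
    rcases Nat.lt_or_ge S.i 2 with hi1 | hi2
    · -- i = 1 : f(v0)=1, private is itself
      refine ⟨S.v 0, Or.inl (by rw [S.fB_v0, if_pos (by omega)]), ?_⟩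
      intro w hwne hw
      rcases S.supp_dist_on hw (by omega : (0:ℕ) ≤ S.d) with ⟨he, -, -⟩ | ⟨-, hf, he⟩ |
        ⟨q, -, h1, h2, -, hf, he⟩ | ⟨r, hr, hf, he⟩
      · exact absurd he hwne
      · rw [he]; omega
      · rw [he, nd_def]; omega
      · rw [he, nd_def]; omega
    · by_cases hside : S.sideL
      · obtain ⟨x, hxoff, hxadj⟩ := hside
        have hLL : S.LL = S.i := S.LL_sideL hi2 ⟨x, hxoff, hxadj⟩
        refine ⟨x, Or.inr ?_, ?_⟩
        · rw [S.fB_v0' hi2, hLL, SimpleGraph.dist_comm,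
            S.dist_off_v hxoff (by omega) (by omega) hxadj, nd_def]
          omega
        · intro w hwne hw
          have hwx : w ≠ x := by
            intro he
            rw [he, S.side_off_zero hxoff (by omega) hxadj (by omega)] at hw
            omega
          rcases S.supp_dist_off hxoff (by omega : S.i - 1 ≤ S.d) hxadj hw hwx with
            ⟨he, -, -⟩ | ⟨-, hf, he⟩ | ⟨q, -, h1, h2, -, hf, he⟩ | ⟨r, hr, hf, he⟩
          · exact absurd he hwne
          · rw [he]; omega
          · rw [he, nd_def]; omega
          · rw [he, nd_def]; omega
      · refine ⟨S.v (S.i - 1), Or.inr ?_, ?_⟩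
        · rw [S.fB_v0' hi2, S.LL_noside hi2 hside, S.dist_v (by omega) (by omega), nd_def]
          omega
        · intro w hwne hw
          rcases S.supp_dist_on hw (by omega : S.i - 1 ≤ S.d) with ⟨he, -, -⟩ | ⟨-, hf, he⟩ |
            ⟨q, -, h1, h2, -, hf, he⟩ | ⟨r, hr, hf, he⟩
          · exact absurd he hwne
          · rw [he]; omega
          · rw [he, nd_def]; omega
          · rw [he, nd_def]; omega
  · -- s = v d
    subst hdd
    rcases Nat.lt_or_ge S.m 2 with hm1 | hm2
    · refine ⟨S.v S.d, Or.inl (by rw [S.fB_vd, if_pos (by omega)]), ?_⟩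
      intro w hwne hw
      rcases S.supp_dist_on hw (le_refl S.d) with ⟨he, hf, hdist⟩ | ⟨he, -, -⟩ |
        ⟨q, -, h1, h2, -, hf, he⟩ | ⟨r, hr, hf, he⟩
      · rw [hdist]; omega
      · exact absurd he hwne
      · rw [he, nd_def]; omega
      · rw [he, nd_def]; omega
    · by_cases hside : S.sideR
      · obtain ⟨x, hxoff, hxadj⟩ := hside
        have hRR : S.RR = S.m := S.RR_sideR hm2 ⟨x, hxoff, hxadj⟩
        have hbd : S.i + 2*S.k + 1 ≤ S.d := by omega
        refine ⟨x, Or.inr ?_, ?_⟩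
        · rw [S.fB_vd' hm2, hRR, SimpleGraph.dist_comm,
            S.dist_off_v hxoff hbd (le_refl _) hxadj, nd_def]
          omega
        · intro w hwne hw
          have hwx : w ≠ x := by
            intro he
            rw [he, S.side_off_zero hxoff hbd hxadj (by omega)] at hw
            omega
          rcases S.supp_dist_off hxoff hbd hxadj hw hwx with
            ⟨he, hf, hdist⟩ | ⟨he, -, -⟩ | ⟨q, -, h1, h2, -, hf, he⟩ | ⟨r, hr, hf, he⟩
          · rw [hdist]; omega
          · exact absurd he hwne
          · rw [he, nd_def]; omega
          · rw [he, nd_def]; omega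
      · refine ⟨S.v (S.i + 2*S.k + 1), Or.inr ?_, ?_⟩
        · rw [S.fB_vd' hm2, S.RR_noside hm2 hside, S.dist_v (le_refl _) (by omega), nd_def]
          omega
        · intro w hwne hw
          rcases S.supp_dist_on hw (by omega : S.i + 2*S.k + 1 ≤ S.d) with
            ⟨he, hf, hdist⟩ | ⟨he, -, -⟩ | ⟨q, -, h1, h2, -, hf, he⟩ | ⟨r, hr, hf, he⟩
          · rw [hdist]; omega
          · exact absurd he hwne
          · rw [he, nd_def]; omega
          · rw [he, nd_def]; omega
  · -- s is an odd-offset window vertex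
    obtain ⟨q0, he0, hq1, hq2, hq3, hq4, hq5⟩ := S.PO_bounds hpo
    subst he0
    refine ⟨S.v q0, Or.inl (by rw [S.fB_PO hpo]), ?_⟩
    intro w hwne hw
    rcases S.supp_dist_on hw (by omega : q0 ≤ S.d) with ⟨he, hf, hdist⟩ | ⟨he, hf, hdist⟩ |
      ⟨q, he, h1, h2, hpar, hf, hdist⟩ | ⟨r, hr, hf, hdist⟩
    · rw [hdist, he]; rw [he] at hf; omega
    · rw [hdist]; omega
    · have hqq : q ≠ q0 := by
        intro heq
        exact hwne (he.trans (congrArg S.v heq))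
      rw [hdist, nd_def]; omega
    · rw [hdist, nd_def]; omega
  · -- s is a window-stem leaf
    obtain ⟨hleaf, r0, hr0, hadj0⟩ := hpa
    have hp0d : S.i + 2*r0 ≤ S.d := by omega
    refine ⟨s, Or.inl (by rw [S.fB_PA_off hoff ⟨hleaf, r0, hr0, hadj0⟩]), ?_⟩
    intro w hwne hw
    rcases S.supp_dist_off hoff hp0d hadj0 hw hwne with ⟨he, hf, hdist⟩ | ⟨he, hf, hdist⟩ |
      ⟨q, he, h1, h2, hpar, hf, hdist⟩ | ⟨r, hr, hf, hdist⟩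
    · rw [hdist]; omega
    · rw [hdist]; omega
    · rw [hdist, nd_def]; omega
    · rw [hdist, nd_def]; omega


lemma ecc_ge (x y : V) : G.dist x y ≤ ecc G x := Finset.le_sup (Finset.mem_univ y)

lemma fB_bcast : IsBroadcast G S.fB := by
  intro x
  have hd := S.hd4; have hik := S.hik; have hi := S.hi; have hm := S.hm1
  have hdm : S.d = S.i + 2*S.k + S.m := S.hd_eq
  rcases Nat.lt_or_ge (S.fB x) 1 with h | h
  · omega
  rcases S.fB_supp h with h0 | hdd | hpo | ⟨hpa, hoff⟩
  · subst h0
    have h1 := S.ecc_ge (S.v 0) (S.v S.d)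
    rw [S.dist_v (by omega) (le_refl _), nd_def] at h1
    have := S.fB_v0_le
    omega
  · subst hdd
    have h1 := S.ecc_ge (S.v S.d) (S.v 0)
    rw [S.dist_v (le_refl _) (by omega), nd_def] at h1
    have := S.fB_vd_le
    omega
  · obtain ⟨q, he, h1, h2, h3, h4, -⟩ := S.PO_bounds hpo
    subst he
    have he1 := S.ecc_ge (S.v q) (S.v 0)
    rw [S.dist_v (by omega) (by omega), nd_def] at he1
    rw [S.fB_PO hpo]
    omega
  · obtain ⟨r, hr, hadj⟩ := hpa.2
    have he1 := S.ecc_ge x (S.v 0)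
    rw [SimpleGraph.dist_comm] at he1
    rw [SimpleGraph.dist_comm, S.dist_off_v hoff (by omega) (by omega) hadj] at he1
    rw [S.fB_PA_off hoff hpa]
    omega

lemma LL_ge : S.i - 1 ≤ S.LL := by
  unfold LL; split_ifs <;> omega

lemma RR_ge : S.m - 1 ≤ S.RR := by
  unfold RR; split_ifs <;> omega

open Finset in
lemma fB_cost : S.d + 1 ≤ ∑ x, S.fB x := by
  classical
  have hd := S.hd4; have hik := S.hik; have hi := S.hi; have hk := S.hk; have hm := S.hm1
  have hdm : S.d = S.i + 2*S.k + S.m := S.hd_eq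
  obtain ⟨l1, l2, hlne, hl1, hl2, ha1, ha2⟩ := S.hs1
  obtain ⟨z1, z2, hzne, hz1, hz2, hb1, hb2⟩ := S.hs2
  -- middle leaves
  have hFex : ∀ r, 1 ≤ r → r ≤ S.k - 1 → ∃ l, IsLeaf G l ∧ G.Adj (S.v (S.i + 2*r)) l :=
    fun r h1 h2 => S.hmid r h1 h2
  have hne : Nonempty V := ⟨S.v 0⟩
  choose! F hF1 hF2 using hFex
  -- the four terms
  have hsplit : ∑ x, S.fB x =
      (∑ x, (if x = S.v 0 then S.LL else 0)) + (∑ x, (if x = S.v S.d then S.RR else 0)) +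
      (∑ x, (if S.POp x then 1 else 0)) + (∑ x, (if S.PAp x then 1 else 0)) := by
    rw [← Finset.sum_add_distrib, ← Finset.sum_add_distrib, ← Finset.sum_add_distrib]
    rfl
  have h1 : (∑ x, (if x = S.v 0 then S.LL else 0)) = S.LL := by
    rw [Finset.sum_ite_eq' Finset.univ (S.v 0) (fun _ => S.LL)]
    simp
  have h2 : (∑ x, (if x = S.v S.d then S.RR else 0)) = S.RR := by
    rw [Finset.sum_ite_eq' Finset.univ (S.v S.d) (fun _ => S.RR)]
    simp
  -- PO count
  have h3 : S.k ≤ ∑ x, (if S.POp x then 1 else 0) := by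
    rw [Finset.sum_boole]
    push_cast
    have hsub : (Finset.range S.k).image (fun t => S.v (S.i + 2*t + 1)) ⊆
        Finset.univ.filter S.POp := by
      intro y hy
      rw [Finset.mem_image] at hy
      obtain ⟨t, ht, he⟩ := hy
      rw [Finset.mem_range] at ht
      rw [Finset.mem_filter]
      exact ⟨Finset.mem_univ _, he ▸ S.mkPO ht⟩
    have hcard := Finset.card_le_card hsub
    rw [Finset.card_image_of_injOn (fun a ha b hb he => by
      rw [Finset.mem_coe, Finset.mem_range] at ha hb
      have := S.hinj (S.i + 2*a + 1) (by omega) (S.i + 2*b + 1) (by omega) he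
      omega)] at hcard
    rw [Finset.card_range] at hcard
    exact hcard
  -- PA count
  have h4 : S.k + 3 ≤ ∑ x, (if S.PAp x then 1 else 0) := by
    rw [Finset.sum_boole]
    push_cast
    set T : Finset V := insert l1 (insert l2 (insert z1 (insert z2
      ((Finset.Ico 1 S.k).image F)))) with hT
    have hstem : ∀ x r, IsLeaf G x → r ≤ S.k → G.Adj (S.v (S.i + 2*r)) x →
        ∀ y ∈ (Finset.Ico 1 S.k).image F, r = 0 ∨ r = S.k → x ≠ y := by
      intro x r hx hr hax y hy hrk hxy
      rw [Finset.mem_image] at hy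
      obtain ⟨t, ht, he⟩ := hy
      rw [Finset.mem_Ico] at ht
      subst hxy
      have hady := hF2 t ht.1 (by omega)
      have := S.stem_uniq hx (by omega) (by omega) hax (he ▸ hady)
      omega
    have himcard : ((Finset.Ico 1 S.k).image F).card = S.k - 1 := by
      rw [Finset.card_image_of_injOn (fun a ha b hb he => by
        rw [Finset.mem_coe, Finset.mem_Ico] at ha hb
        have hla := hF1 a ha.1 (by omega)
        have hada := hF2 a ha.1 (by omega)
        have hadb := hF2 b hb.1 (by omega)
        have := S.stem_uniq hla (by omega) (by omega) hada (he ▸ hadb)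
        omega), Nat.card_Ico]
    have hl1a : G.Adj (S.v (S.i + 2*0)) l1 := by rw [show S.i + 2*0 = S.i by omega]; exact ha1
    have hl2a : G.Adj (S.v (S.i + 2*0)) l2 := by rw [show S.i + 2*0 = S.i by omega]; exact ha2
    have hl1z1 : l1 ≠ z1 := fun he => by
      have := S.stem_uniq hl1 (by omega) (by omega) hl1a (he ▸ hb1); omega
    have hl1z2 : l1 ≠ z2 := fun he => by
      have := S.stem_uniq hl1 (by omega) (by omega) hl1a (he ▸ hb2); omega
    have hl2z1 : l2 ≠ z1 := fun he => by
      have := S.stem_uniq hl2 (by omega) (by omega) hl2a (he ▸ hb1); omega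
    have hl2z2 : l2 ≠ z2 := fun he => by
      have := S.stem_uniq hl2 (by omega) (by omega) hl2a (he ▸ hb2); omega
    have hl1im : l1 ∉ (Finset.Ico 1 S.k).image F := fun hmem =>
      hstem l1 0 hl1 (by omega) hl1a l1 hmem (Or.inl rfl) rfl
    have hl2im : l2 ∉ (Finset.Ico 1 S.k).image F := fun hmem =>
      hstem l2 0 hl2 (by omega) hl2a l2 hmem (Or.inl rfl) rfl
    have hz1im : z1 ∉ (Finset.Ico 1 S.k).image F := fun hmem =>
      hstem z1 S.k hz1 (le_refl _) hb1 z1 hmem (Or.inr rfl) rfl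
    have hz2im : z2 ∉ (Finset.Ico 1 S.k).image F := fun hmem =>
      hstem z2 S.k hz2 (le_refl _) hb2 z2 hmem (Or.inr rfl) rfl
    have hTcard : T.card = S.k + 3 := by
      rw [hT, Finset.card_insert_of_notMem (by
          simp only [Finset.mem_insert]
          push_neg
          exact ⟨hlne, hl1z1, hl1z2, hl1im⟩),
        Finset.card_insert_of_notMem (by
          simp only [Finset.mem_insert]
          push_neg
          exact ⟨hl2z1, hl2z2, hl2im⟩),
        Finset.card_insert_of_notMem (by
          simp only [Finset.mem_insert]
          push_neg
          exact ⟨hzne, hz1im⟩),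
        Finset.card_insert_of_notMem hz2im, himcard]
      omega
    have hsub : T ⊆ Finset.univ.filter S.PAp := by
      intro y hy
      rw [Finset.mem_filter]
      refine ⟨Finset.mem_univ _, ?_⟩
      rw [hT] at hy
      simp only [Finset.mem_insert] at hy
      rcases hy with he | he | he | he | hmem
      · exact he ▸ S.mkPA 0 hl1 (by omega) hl1a
      · exact he ▸ S.mkPA 0 hl2 (by omega) hl2a
      · exact he ▸ S.mkPA S.k hz1 (le_refl _) hb1
      · exact he ▸ S.mkPA S.k hz2 (le_refl _) hb2
      · rw [Finset.mem_image] at hmem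
        obtain ⟨t, ht, he⟩ := hmem
        rw [Finset.mem_Ico] at ht
        exact he ▸ S.mkPA t (hF1 t ht.1 (by omega)) (by omega) (hF2 t ht.1 (by omega))
    exact hTcard ▸ Finset.card_le_card hsub
  have hL := S.LL_ge
  have hR := S.RR_ge
  omega

/-- The broadcast `fB` is a minimal dominating broadcast. -/
lemma fB_min : IsMinDomBroadcast G S.fB := by
  refine ⟨⟨S.fB_bcast, S.fB_dom⟩, ?_⟩
  intro f' hlt hdom'
  rw [Pi.lt_def] at hlt
  obtain ⟨hle, t, hlts⟩ := hlt
  rw [Pi.le_def] at hle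
  have hts : 1 ≤ S.fB t := by omega
  obtain ⟨u, hdisj, hforall⟩ := S.fB_private hts
  obtain ⟨w, hw1, hw2⟩ := hdom'.2 u
  by_cases hws : w = t
  · subst hws
    rcases hdisj with h | h
    · omega
    · have hx2 := hle w
      omega
  · have hw : 1 ≤ S.fB w := le_trans hw1 (hle w)
    have hx1 := hforall w hws hw
    have hx2 := hle w
    omega

lemma main : S.d < upperBroadcastNum G := by
  have hbdd : BddAbove {n | ∃ f : V → ℕ, IsMinDomBroadcast G f ∧ cost f = n} := by
    refine ⟨∑ x, ecc G x, ?_⟩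
    intro n hn
    obtain ⟨f, ⟨⟨hb, -⟩, -⟩, hcf⟩ := hn
    subst hcf
    exact Finset.sum_le_sum (fun x _ => hb x)
  have hmem : cost S.fB ∈ {n | ∃ f : V → ℕ, IsMinDomBroadcast G f ∧ cost f = n} :=
    ⟨S.fB, S.fB_min, rfl⟩
  have hle := le_csSup hbdd hmem
  have hcost := S.fB_cost
  have h2 : S.d < cost S.fB := by unfold cost; omega
  unfold upperBroadcastNum
  exact lt_of_lt_of_le h2 hle

end Cat
end Dev

/-- strong stems `v i` and `v (i+2k)` with stems in between (at even
offsets) force `Γ_b(T) > d` in a caterpillar. -/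
theorem stmt11 {V : Type*} [Fintype V] [DecidableEq V] (G : SimpleGraph V)
    [DecidableRel G.Adj] (hT : G.IsTree) (d : ℕ) (v : ℕ → V)
    (hdiam : diam G = d)
    (hadj : ∀ i < d, G.Adj (v i) (v (i + 1)))
    (hinj : ∀ i ≤ d, ∀ j ≤ d, v i = v j → i = j)
    (hcat : ∀ x : V, (∀ j ≤ d, v j ≠ x) → IsLeaf G x ∧ ∃ j ≤ d, G.Adj (v j) x)
    (i k : ℕ) (hi : 1 ≤ i) (hk : 1 ≤ k) (hik : i + 2 * k ≤ d - 1)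
    (hs1 : IsStrongStem G (v i)) (hs2 : IsStrongStem G (v (i + 2 * k)))
    (hmid : ∀ r, 1 ≤ r → r ≤ k - 1 → IsStem G (v (i + 2 * r))) :
    d < upperBroadcastNum G :=
  Cat.main ⟨d, v, hT, hdiam, hadj, hinj, hcat, i, k, hi, hk, hik, hs1, hs2, hmid⟩

end AJC
end
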